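/- arXiv:2104.14171 — 7 statements merged into one kernel-verified Lean document; each statement's English description precedes it below -/
import Mathlib

section
/- Let T_1, …, T_r (r ≥ 1) be nonempty strings over Σ, let X be a single block variable, and let d ∈ ℕ. The system consisting of the r equations T_i ≡ X (1 ≤ i ≤ r) admits a solution with at most d deletions if and only if there exists a nonempty string s over Σ that is a subsequence of every T_i and satisfies Σ_{i=1}^r |T_i| − r·|s| ≤ d. (Correctness of the reduction from Longest Common Subsequence used in Theorem 3.3.) -/
/-- For nonempty target strings `T 1, …, T r` (`r ≥ 1`), a single block
variable `X`, and `d ∈ ℕ`: the system of the `r` equations `T i ≡ X` admits a solution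
with at most `d` deletions (i.e. there are subsequences `T' i` of the `T i` losing at most
`d` letters in total, together with an assignment of nonempty strings to all blocks whose
value on `X` equals every `T' i`) if and only if there is a nonempty string `s` that is a
common subsequence of all `T i` with `∑ i |T i| − r·|s| ≤ d`. -/
theorem stmt_1 {α β : Type*} (r : ℕ) (hr : 1 ≤ r)
    (T : Fin r → List α) (hT : ∀ i, T i ≠ []) (X : β) (d : ℕ) :
    (∃ T' : Fin r → List α,
        (∀ i, (T' i).Sublist (T i)) ∧
        (∑ i, ((T i).length - (T' i).length)) ≤ d ∧
        ∃ σ : β → List α, (∀ b : β, σ b ≠ []) ∧ ∀ i, [X].flatMap σ = T' i) ↔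
    (∃ s : List α, s ≠ [] ∧ (∀ i, s.Sublist (T i)) ∧
        (∑ i, (T i).length) - r * s.length ≤ d) := by
  constructor
  · rintro ⟨T', hsub, hd, σ, hσ, hX⟩
    have hXs : ∀ i, σ X = T' i := by intro i; simpa using hX i
    refine ⟨σ X, hσ X, fun i => (hXs i) ▸ hsub i, ?_⟩
    calc (∑ i, (T i).length) - r * (σ X).length
        = (∑ i, (T i).length) - ∑ _i : Fin r, (σ X).length := by
          rw [Finset.sum_const, Finset.card_univ, Fintype.card_fin, smul_eq_mul]
      _ ≤ ∑ i, ((T i).length - (σ X).length) := by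
          rw [Nat.sub_le_iff_le_add, ← Finset.sum_add_distrib]
          exact Finset.sum_le_sum fun i _ => le_tsub_add
      _ = ∑ i, ((T i).length - (T' i).length) := by
          exact Finset.sum_congr rfl fun i _ => by rw [hXs i]
      _ ≤ d := hd
  · rintro ⟨s, hs, hsub, hd⟩
    refine ⟨fun _ => s, hsub, ?_, fun _ => s, fun _ => hs, fun i => by simp⟩
    calc ∑ i, ((T i).length - s.length)
        = (∑ i, (T i).length) - ∑ _i : Fin r, s.length := by
          rw [eq_comm, Nat.sub_eq_iff_eq_add (Finset.sum_le_sum fun i _ => (hsub i).length_le),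
            ← Finset.sum_add_distrib]
          exact Finset.sum_congr rfl fun i _ => (Nat.sub_add_cancel (hsub i).length_le).symm
      _ = (∑ i, (T i).length) - r * s.length := by
          rw [Finset.sum_const, Finset.card_univ, Fintype.card_fin, smul_eq_mul]
      _ ≤ d := hd
end

section
/- Let Σ be an alphabet, let $ be a letter not in Σ, let T_1, …, T_r (r ≥ 1) be nonempty strings over Σ, let d ∈ ℕ, and let P = $^{d+1} (d+1 consecutive copies of $). The single string equation P T_1 P T_2 ⋯ P T_r ≡ X X ⋯ X (the single block X repeated r times) admits a solution with at most d deletions if and only if there exists a (possibly empty) string s over Σ that is a subsequence of every T_i and satisfies Σ_{i=1}^r |T_i| − r·|s| ≤ d. (Correctness of the single-equation reduction from Longest Common Subsequence in Theorem 3.3, taking the paper's 'sufficiently long' $-prefix to have length d+1.) -/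
/-!
Write `c` for `$` and `W = c^(d+1) T₁ ⋯ c^(d+1) T_r`. A solution is a subsequence `u^r` of `W`
obtained by at most `d` deletions. As `W` contains `r (d + 1)` letters `c`, the word `u` contains `c`.

The key invariant is the number of positions where a letter other than `c` is followed by `c`:
deleting letters cannot increase it, it is at most `r - 1` on `W`, and it is at least `r` times its
value on `u` for `u^r`. Hence it vanishes on `u`, that is `u = c^k w` with `k > 0` and `c ∉ w`.
Counting once more shows that an embedding of `(c^k w)^r` into `W` sends the `i`-th copy of `c^k w`
into `c^(d+1) T_i`, so `w` is a common subsequence of the `T_i`, and the deletions of letters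
other than `c` give `∑ |T_i| - r |w| ≤ d`. Conversely, `(c^(d+1) s)^r` is a solution for every
common subsequence `s`.
-/

open List

theorem List.Sublist.countP_sub_countP_le {α : Type*} {l₁ l₂ : List α} (h : l₁ <+ l₂)
    (p : α → Bool) : countP p l₂ - countP p l₁ ≤ l₂.length - l₁.length := by
  have := h.countP_le (p := p)
  have := h.countP_le (p := fun a => ¬p a)
  rw [length_eq_countP_add_countP p (l := l₁), length_eq_countP_add_countP p (l := l₂)]
  omega

namespace StringEquation

section

variable {α : Type*}

lemma getLastD_replicate_append_ne {c : α} {k : ℕ} {w : List α} (hcw : c ∉ w) (hw : w ≠ [])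
    (p : α) : (replicate k c ++ w).getLastD p ≠ c := by
  have : (replicate k c ++ w).getLastD p ∈ w := by
    simp [getLast?_eq_some_getLast hw, getLast_mem]
  exact ne_of_mem_of_not_mem this hcw

lemma flatten_replicate_sublist_flatMap {s : List α} (l : List α) {ts : List (List α)}
    (hs : ∀ t ∈ ts, s <+ t) : (replicate ts.length (l ++ s)).flatten <+ ts.flatMap (l ++ ·) := by
  induction ts with
  | nil => simp
  | cons t ts ih =>
    rw [length_cons, replicate_succ, flatten_cons, flatMap_cons]
    exact ((hs t mem_cons_self).append_left l).append (ih fun t ht => hs t (mem_cons_of_mem _ ht))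

lemma length_flatMap_sub_length_flatten_replicate (l s : List α) (ts : List (List α)) :
    (ts.flatMap (l ++ ·)).length - (replicate ts.length (l ++ s)).flatten.length =
      (ts.map length).sum - ts.length * s.length := by
  simp only [length_flatMap, length_append, sum_map_add, map_const', sum_replicate, smul_eq_mul,
    length_flatten, map_replicate, mul_add]
  omega

end

variable {α : Type*} [DecidableEq α] {c : α}

/-- The number of positions of `p :: l` where a letter other than `c` is followed by `c`. -/
def entryCount (c : α) : α → List α → ℕ
  | _, [] => 0
  | p, a :: l => (if p ≠ c ∧ a = c then 1 else 0) + entryCount c a l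

@[simp] lemma entryCount_nil (p : α) : entryCount c p [] = 0 := rfl

@[simp] lemma entryCount_cons (p a : α) (l : List α) :
    entryCount c p (a :: l) = (if p ≠ c ∧ a = c then 1 else 0) + entryCount c a l := rfl

lemma entryCount_eq_entryCount_self_add (p : α) (l : List α) :
    entryCount c p l = entryCount c c l + if p ≠ c ∧ l.head? = some c then 1 else 0 := by
  cases l with
  | nil => simp
  | cons a l =>
    simp only [entryCount_cons, head?_cons, Option.some.injEq]
    split_ifs <;> simp_all [add_comm]

lemma entryCount_self_le (p : α) (l : List α) : entryCount c c l ≤ entryCount c p l := by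
  rw [entryCount_eq_entryCount_self_add p]
  omega

lemma entryCount_le_entryCount_self_add_one (p : α) (l : List α) :
    entryCount c p l ≤ entryCount c c l + 1 := by
  rw [entryCount_eq_entryCount_self_add p]
  split_ifs <;> omega

lemma entryCount_append (p : α) (l₁ l₂ : List α) :
    entryCount c p (l₁ ++ l₂) = entryCount c p l₁ + entryCount c (l₁.getLastD p) l₂ := by
  induction l₁ generalizing p with
  | nil => simp
  | cons a l ih => rw [cons_append, entryCount_cons, entryCount_cons, ih, getLastD_cons, add_assoc]

lemma entryCount_eq_zero_of_not_mem (p : α) {l : List α} (h : c ∉ l) : entryCount c p l = 0 := by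
  induction l generalizing p with
  | nil => rfl
  | cons a l ih =>
    rw [mem_cons, not_or] at h
    simp [Ne.symm h.1, ih a h.2]

lemma entryCount_pos_of_mem {p : α} (hp : p ≠ c) {l : List α} (h : c ∈ l) :
    0 < entryCount c p l := by
  induction l generalizing p with
  | nil => simp at h
  | cons a l ih =>
    by_cases ha : a = c
    · simp [hp, ha]
    · have := ih ha ((mem_cons.mp h).resolve_left (Ne.symm ha))
      simp only [entryCount_cons, ha, and_false, if_false]
      omega

lemma entryCount_replicate_append (k : ℕ) (l : List α) :
    entryCount c c (replicate k c ++ l) = entryCount c c l := by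
  induction k with
  | zero => rfl
  | succ k ih => simpa [replicate_succ] using ih

lemma entryCount_le_of_sublist {l₁ l₂ : List α} (h : l₁ <+ l₂) (p : α) :
    entryCount c p l₁ ≤ entryCount c p l₂ := by
  induction h generalizing p with
  | slnil => rfl
  | cons b _ ih =>
    refine (?_ : entryCount c p _ ≤ _ + entryCount c b _).trans (Nat.add_le_add_left (ih b) _)
    rw [entryCount_eq_entryCount_self_add p, entryCount_eq_entryCount_self_add b]
    split_ifs <;> simp_all
  | cons_cons b _ ih => exact Nat.add_le_add_left (ih b) _

lemma exists_eq_replicate_append_of_entryCount_eq_zero {u : List α} (h : entryCount c c u = 0) :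
    ∃ k w, u = replicate k c ++ w ∧ c ∉ w := by
  induction u with
  | nil => exact ⟨0, [], rfl, not_mem_nil⟩
  | cons a u ih =>
    by_cases ha : a = c
    · subst ha
      obtain ⟨k, w, rfl, hw⟩ := ih (by simpa using h)
      exact ⟨k + 1, w, rfl, hw⟩
    · refine ⟨0, a :: u, rfl, ?_⟩
      have : c ∉ u := fun hc => (entryCount_pos_of_mem ha hc).ne' (by simpa [ha] using h)
      simp [Ne.symm ha, this]

lemma mul_entryCount_le_entryCount_flatten_replicate (r : ℕ) (u : List α) :
    r * entryCount c c u ≤ entryCount c c (replicate r u).flatten := by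
  induction r with
  | zero => simp
  | succ r ih =>
    rw [replicate_succ, flatten_cons, entryCount_append, Nat.succ_mul]
    have := entryCount_self_le (c := c) (u.getLastD c) (replicate r u).flatten
    omega

lemma entryCount_flatten_replicate_replicate_append {k : ℕ} {w : List α} (hk : 0 < k)
    (hcw : c ∉ w) (hw : w ≠ []) (m : ℕ) {x : α} (hx : x ≠ c) :
    entryCount c x (replicate m (replicate k c ++ w)).flatten = m := by
  induction m generalizing x with
  | zero => rfl
  | succ m ih =>
    obtain ⟨k, rfl⟩ := Nat.exists_eq_add_one_of_ne_zero hk.ne'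
    rw [replicate_succ, flatten_cons, entryCount_append,
      ih (getLastD_replicate_append_ne hcw hw x), replicate_succ, cons_append, entryCount_cons,
      entryCount_replicate_append, entryCount_eq_zero_of_not_mem c hcw]
    simp [hx, add_comm]

lemma entryCount_flatMap_replicate_append_le {n : ℕ} {ts : List (List α)}
    (hts : ∀ t ∈ ts, c ∉ t) :
    entryCount c c (ts.flatMap (replicate n c ++ ·)) ≤ ts.length - 1 := by
  induction ts with
  | nil => simp
  | cons t ts ih =>
    rw [flatMap_cons, entryCount_append, entryCount_replicate_append,
      entryCount_eq_zero_of_not_mem c (hts t mem_cons_self), zero_add, length_cons,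
      Nat.add_sub_cancel]
    rcases ts with _ | ⟨t', ts⟩
    · simp
    · have := ih fun t ht => hts t (mem_cons_of_mem _ ht)
      have := entryCount_le_entryCount_self_add_one (c := c) ((replicate n c ++ t).getLastD c)
        ((t' :: ts).flatMap (replicate n c ++ ·))
      simp only [length_cons] at *
      omega

lemma filter_ne_replicate_append {k : ℕ} {w : List α} (hcw : c ∉ w) :
    (replicate k c ++ w).filter (· ≠ c) = w := by
  rw [filter_append, filter_replicate_of_neg (by simp), nil_append]
  exact filter_eq_self.2 fun a ha => by simpa using ne_of_mem_of_not_mem ha hcw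

lemma eq_replicate_append_of_append_eq_append {k m : ℕ} {w l₁ l₂ : List α} (hk : 0 < k)
    (hcw : c ∉ w) (hw : w ≠ [])
    (heq : replicate k c ++ w ++ (replicate m (replicate k c ++ w)).flatten = l₁ ++ l₂)
    (he₁ : entryCount c c l₁ = 0) (he₂ : entryCount c c l₂ < m ∨ l₂ = []) :
    l₁ = replicate k c ++ w := by
  have hB : entryCount c c (replicate k c ++ w) = 0 := by
    rw [entryCount_replicate_append, entryCount_eq_zero_of_not_mem c hcw]
  have hlast := getLastD_replicate_append_ne hcw hw (k := k) c
  obtain ⟨k, rfl⟩ := Nat.exists_eq_add_one_of_ne_zero hk.ne'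
  -- Any other split puts the `c` that starts the next block right after `w` inside `l₁`, or
  -- leaves a tail of `w` in `l₂` in front of all `m` remaining blocks.
  rcases append_eq_append_iff.mp heq with ⟨_ | ⟨y, a⟩, rfl, hP⟩ | ⟨_ | ⟨z, b⟩, hl₁, rfl⟩
  · exact append_nil _
  · rcases m with _ | m
    · simp at hP
    have hy : y = c := by simp [replicate_succ] at hP; exact hP.1.symm
    rw [entryCount_append, hB, entryCount_cons, if_pos ⟨hlast, hy⟩] at he₁
    omega
  · simpa using hl₁.symm
  · have hzb : (z :: b).getLastD c = (replicate (k + 1) c ++ w).getLastD c := by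
      simp [hl₁, getLast?_eq_some_getLast]
    rw [entryCount_append, hzb,
      entryCount_flatten_replicate_replicate_append hk hcw hw _ hlast] at he₂
    simp at he₂

theorem forall_sublist_of_flatten_replicate_sublist {k n : ℕ} {w : List α} (hk : 0 < k)
    (hcw : c ∉ w) {ts : List (List α)} (hts : ∀ t ∈ ts, c ∉ t)
    (h : (replicate ts.length (replicate k c ++ w)).flatten <+ ts.flatMap (replicate n c ++ ·)) :
    ∀ t ∈ ts, w <+ t := by
  rcases eq_or_ne w [] with rfl | hw
  · simp
  induction ts with
  | nil => simp
  | cons t ts ih =>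
    have hct : c ∉ t := hts t mem_cons_self
    have hts' : ∀ t ∈ ts, c ∉ t := fun t ht => hts t (mem_cons_of_mem _ ht)
    rw [length_cons, replicate_succ, flatten_cons, flatMap_cons, sublist_append_iff] at h
    obtain ⟨l₁, l₂, heq, h₁, h₂⟩ := h
    have he₁ : entryCount c c l₁ = 0 := by
      have : entryCount c c l₁ ≤ entryCount c c (replicate n c ++ t) :=
        entryCount_le_of_sublist h₁ c
      rwa [entryCount_replicate_append, entryCount_eq_zero_of_not_mem c hct, Nat.le_zero] at this
    have he₂ : entryCount c c l₂ < ts.length ∨ l₂ = [] := by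
      rcases eq_or_ne ts [] with rfl | hne
      · exact .inr (eq_nil_of_sublist_nil h₂)
      · have := (entryCount_le_of_sublist h₂ c).trans (entryCount_flatMap_replicate_append_le hts')
        have := length_pos_iff.2 hne
        exact .inl (by omega)
    obtain rfl := eq_replicate_append_of_append_eq_append hk hcw hw heq he₁ he₂
    obtain rfl := append_cancel_left heq
    refine forall_mem_cons.2 ⟨?_, ih hts' h₂⟩
    simpa only [filter_ne_replicate_append hcw, filter_ne_replicate_append hct] using
      h₁.filter (· ≠ c)

theorem forall_filter_sublist_of_flatten_replicate_sublist {n : ℕ} {ts : List (List α)}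
    (hts : ∀ t ∈ ts, c ∉ t) {u : List α} (hcu : c ∈ u)
    (h : (replicate ts.length u).flatten <+ ts.flatMap (replicate n c ++ ·)) :
    ∀ t ∈ ts, u.filter (· ≠ c) <+ t := by
  rcases eq_or_ne ts [] with rfl | hne
  · simp
  have hu : entryCount c c u = 0 := by
    have hle := (mul_entryCount_le_entryCount_flatten_replicate ts.length u).trans
      ((entryCount_le_of_sublist h c).trans (entryCount_flatMap_replicate_append_le hts))
    have hpos := length_pos_iff.2 hne
    by_contra hu
    have := Nat.le_mul_of_pos_right ts.length (Nat.pos_of_ne_zero hu)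
    omega
  obtain ⟨k, w, rfl, hcw⟩ := exists_eq_replicate_append_of_entryCount_eq_zero hu
  have hk : 0 < k := by
    rcases mem_append.mp hcu with hc | hc
    · exact Nat.pos_of_ne_zero (by rintro rfl; simp at hc)
    · exact absurd hc hcw
  rw [filter_ne_replicate_append hcw]
  exact forall_sublist_of_flatten_replicate_sublist hk hcw hts h

lemma count_flatMap_replicate_append (n : ℕ) {ts : List (List α)} (hts : ∀ t ∈ ts, c ∉ t) :
    count c (ts.flatMap (replicate n c ++ ·)) = ts.length * n := by
  induction ts with
  | nil => simp
  | cons t ts ih =>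
    rw [flatMap_cons, count_append, count_append, count_replicate_self,
      count_eq_zero_of_not_mem (hts t mem_cons_self), ih fun t ht => hts t (mem_cons_of_mem _ ht),
      length_cons, Nat.succ_mul]
    omega

lemma filter_flatMap_replicate_append (n : ℕ) {ts : List (List α)} (hts : ∀ t ∈ ts, c ∉ t) :
    (ts.flatMap (replicate n c ++ ·)).filter (· ≠ c) = ts.flatten := by
  induction ts with
  | nil => simp
  | cons t ts ih =>
    rw [flatMap_cons, filter_append, filter_ne_replicate_append (hts t mem_cons_self),
      ih fun t ht => hts t (mem_cons_of_mem _ ht), flatten_cons]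

lemma mem_of_flatten_replicate_sublist {n : ℕ} {ts : List (List α)} (hne : ts ≠ [])
    (hts : ∀ t ∈ ts, c ∉ t) {u : List α}
    (h : (replicate ts.length u).flatten <+ ts.flatMap (replicate n c ++ ·))
    (hdel : (ts.flatMap (replicate n c ++ ·)).length - (replicate ts.length u).flatten.length < n) :
    c ∈ u := by
  by_contra hcu
  have hcount := h.countP_sub_countP_le (· == c)
  rw [← count_eq_countP, ← count_eq_countP, count_flatMap_replicate_append n hts, count_flatten, map_replicate,
    count_eq_zero_of_not_mem hcu] at hcount
  have := Nat.le_mul_of_pos_left n (length_pos_iff.2 hne)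
  simp only [sum_replicate, smul_zero, Nat.sub_zero] at hcount
  omega

lemma sum_length_sub_lt_of_flatten_replicate_sublist {n : ℕ} {ts : List (List α)}
    (hts : ∀ t ∈ ts, c ∉ t) {u : List α}
    (h : (replicate ts.length u).flatten <+ ts.flatMap (replicate n c ++ ·))
    (hdel : (ts.flatMap (replicate n c ++ ·)).length - (replicate ts.length u).flatten.length < n) :
    (ts.map length).sum - ts.length * (u.filter (· ≠ c)).length < n := by
  have hfilter := h.countP_sub_countP_le (· ≠ c)
  rw [countP_eq_length_filter, countP_eq_length_filter, filter_flatMap_replicate_append n hts,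
    filter_flatten, map_replicate, length_flatten, length_flatten, map_replicate,
    sum_replicate, smul_eq_mul] at hfilter
  omega

theorem forall_filter_sublist_and_sum_length_sub_lt {n : ℕ} {ts : List (List α)} (hne : ts ≠ [])
    (hts : ∀ t ∈ ts, c ∉ t) {u : List α}
    (h : (replicate ts.length u).flatten <+ ts.flatMap (replicate n c ++ ·))
    (hdel : (ts.flatMap (replicate n c ++ ·)).length - (replicate ts.length u).flatten.length < n) :
    (∀ t ∈ ts, u.filter (· ≠ c) <+ t) ∧
      (ts.map length).sum - ts.length * (u.filter (· ≠ c)).length < n :=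
  ⟨forall_filter_sublist_of_flatten_replicate_sublist hts
    (mem_of_flatten_replicate_sublist hne hts h hdel) h,
    sum_length_sub_lt_of_flatten_replicate_sublist hts h hdel⟩

end StringEquation

open StringEquation

theorem stmt_2_general {α β : Type*} (S : Set α) (dollar : α) (hdollar : dollar ∉ S)
    (r : ℕ) (hr : 1 ≤ r)
    (T : Fin r → List α) (hTS : ∀ i, ∀ a ∈ T i, a ∈ S)
    (d : ℕ) (X : β) :
    (∃ T' : List α,
        T'.Sublist ((List.ofFn fun i => List.replicate (d + 1) dollar ++ T i).flatten) ∧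
        ((List.ofFn fun i => List.replicate (d + 1) dollar ++ T i).flatten.length
          - T'.length) ≤ d ∧
        ∃ σ : β → List α, (∀ b : β, σ b ≠ []) ∧ (List.replicate r X).flatMap σ = T') ↔
    (∃ s : List α, (∀ a ∈ s, a ∈ S) ∧ (∀ i, s.Sublist (T i)) ∧
        (∑ i, (T i).length) - r * s.length ≤ d) := by
  classical
  have hts : ∀ t ∈ ofFn T, dollar ∉ t := fun t ht hd => by
    obtain ⟨i, rfl⟩ := mem_ofFn.1 ht
    exact hdollar (hTS i _ hd)
  have hW : (ofFn fun i => replicate (d + 1) dollar ++ T i).flatten =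
      (ofFn T).flatMap (replicate (d + 1) dollar ++ ·) := by
    simp [flatMap_def, map_ofFn, Function.comp_def]
  rw [hW]
  constructor
  · rintro ⟨_, hsub, hdel, σ, -, rfl⟩
    rw [flatMap_replicate] at hsub hdel
    obtain ⟨hsT, hlen⟩ := forall_filter_sublist_and_sum_length_sub_lt (u := σ X)
      (by simp; omega) hts (by rwa [length_ofFn]) (by rw [length_ofFn]; omega)
    refine ⟨(σ X).filter (· ≠ dollar),
      fun a ha => hTS ⟨0, hr⟩ a ((hsT _ (mem_ofFn.2 ⟨_, rfl⟩)).subset ha),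
      fun i => hsT _ (mem_ofFn.2 ⟨i, rfl⟩), ?_⟩
    simpa [map_ofFn, sum_ofFn] using Nat.le_of_lt_succ hlen
  · rintro ⟨s, -, hs, hdel⟩
    have hlen := length_flatMap_sub_length_flatten_replicate (replicate (d + 1) dollar) s (ofFn T)
    simp only [length_ofFn, map_ofFn, sum_ofFn, Function.comp_apply] at hlen
    refine ⟨(replicate r (replicate (d + 1) dollar ++ s)).flatten, ?_, hlen ▸ hdel,
      fun _ => replicate (d + 1) dollar ++ s, fun _ => by simp, flatMap_replicate⟩
    simpa using flatten_replicate_sublist_flatMap (replicate (d + 1) dollar) (ts := ofFn T)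
      (by simpa using hs)

/-- Let `S ⊆ α` be the alphabet and `dollar ∉ S` a fresh letter.
For nonempty strings `T 1, …, T r` over `S` (`r ≥ 1`), `d ∈ ℕ`, and
`P = dollar^(d+1)`, the single string equation
`P T₁ P T₂ ⋯ P T_r ≡ X X ⋯ X` (the single block `X` repeated `r` times) admits a
solution with at most `d` deletions if and only if there exists a (possibly empty)
string `s` over `S` that is a subsequence of every `T i` and satisfies
`∑ i |T i| − r·|s| ≤ d`. -/
theorem stmt_2 {α β : Type*} (S : Set α) (dollar : α) (hdollar : dollar ∉ S)
    (r : ℕ) (hr : 1 ≤ r)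
    (T : Fin r → List α) (hT : ∀ i, T i ≠ []) (hTS : ∀ i, ∀ a ∈ T i, a ∈ S)
    (d : ℕ) (X : β) :
    (∃ T' : List α,
        T'.Sublist ((List.ofFn fun i => List.replicate (d + 1) dollar ++ T i).flatten) ∧
        ((List.ofFn fun i => List.replicate (d + 1) dollar ++ T i).flatten.length
          - T'.length) ≤ d ∧
        ∃ σ : β → List α, (∀ b : β, σ b ≠ []) ∧ (List.replicate r X).flatMap σ = T') ↔
    (∃ s : List α, (∀ a ∈ s, a ∈ S) ∧ (∀ i, s.Sublist (T i)) ∧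
        (∑ i, (T i).length) - r * s.length ≤ d) :=
  stmt_2_general S dollar hdollar r hr T hTS d X
end

section
/- A system of string equations that has only border blocks is satisfied by some assignment if and only if it admits a feasible length function ℓ. In particular, a system in which every pattern 𝒳_i has length exactly 2 is satisfiable if and only if it admits a feasible length function. (Combinatorial core of Proposition 5.1.) -/
/-- A length function `ℓ : β → ℕ` is *feasible* for the system of string equations
`{T i ≡ P i : i : Fin r}` if:
(a) `ℓ X ≥ 1` for every block `X` occurring in the system;
(b) for every block `X` there is a string `s` of length `ℓ X` which is a prefix of
every target whose pattern begins with `X` and a suffix of every target whose pattern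
ends with `X`;
(c) for every equation `T ≡ 𝒳` with first block `p` and last block `q`:
if `|𝒳| = 1` then `ℓ p = |T|`; if `|𝒳| = 2` then `ℓ p + ℓ q = |T|`; and if `|𝒳| ≥ 3`
then `ℓ p + ℓ q + (|𝒳| − 2) ≤ |T|`. -/
def Feasible {α β : Type*} {r : ℕ} (T : Fin r → List α) (P : Fin r → List β)
    (ℓ : β → ℕ) : Prop :=
  (∀ X : β, (∃ i, X ∈ P i) → 1 ≤ ℓ X) ∧
  (∀ X : β, ∃ s : List α, s.length = ℓ X ∧
      (∀ i, (P i).head? = some X → s <+: T i) ∧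
      (∀ i, (P i).getLast? = some X → s <:+ T i)) ∧
  (∀ i, ∀ p q : β, (P i).head? = some p → (P i).getLast? = some q →
      ((P i).length = 1 → ℓ p = (T i).length) ∧
      ((P i).length = 2 → ℓ p + ℓ q = (T i).length) ∧
      (3 ≤ (P i).length → ℓ p + ℓ q + ((P i).length - 2) ≤ (T i).length))

/-!
A solution `σ` makes `ℓ X = |σ X|` feasible, with witnesses `s_X = σ X`. Conversely, let `s_X`
witness feasibility of `ℓ`. A target whose pattern has at least two blocks, `p 𝒳' q`, splits as
`s_p m s_q` with `|m| ≥ |𝒳'|`, and `m = []` when `𝒳'` is empty, so `m` can be cut into `|𝒳'|`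
nonempty pieces. Border blocks get `s_X` wherever they occur, and every internal block occurs
exactly once, so these per-equation factorizations glue to one assignment.
-/

namespace List

variable {α β : Type*}

theorem exists_eq_append_append_of_prefix_of_suffix {l u v : List α} (hu : u <+: l)
    (hv : v <:+ l) (huv : u.length + v.length ≤ l.length) : ∃ m, l = u ++ m ++ v := by
  obtain ⟨t, rfl⟩ := hu
  obtain ⟨m, rfl⟩ := suffix_of_suffix_length_le hv (suffix_append u t) (by simpa using huv)
  exact ⟨m, (append_assoc _ _ _).symm⟩

theorem exists_flatten_eq_of_length_le :
    ∀ (n : ℕ) (l : List α), n ≤ l.length → (n = 0 → l = []) →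
      ∃ L : List (List α), L.length = n ∧ L.flatten = l ∧ ∀ x ∈ L, x ≠ []
  | 0, l, _, hl => ⟨[], rfl, (hl rfl).symm, by simp⟩
  | 1, l, hn, _ => ⟨[l], rfl, by simp, by simpa [← length_pos_iff] using Nat.lt_of_succ_le hn⟩
  | n + 2, a :: l, hn, _ => by
    obtain ⟨L, hlen, hflat, hne⟩ :=
      exists_flatten_eq_of_length_le (n + 1) l (by simpa using hn) (by simp)
    exact ⟨[a] :: L, by simp [hlen], by simp [hflat], by simpa using hne⟩

theorem length_le_length_flatMap {l : List β} {f : β → List α} (hf : ∀ b ∈ l, f b ≠ []) :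
    l.length ≤ (l.flatMap f).length := by
  rw [length_flatMap]
  simpa using length_le_sum_of_one_le (l.map fun b => (f b).length)
    (by simpa [Nat.one_le_iff_ne_zero] using hf)

theorem two_le_count_of_getElem?_eq [DecidableEq α] {l : List α} {a : α} {k k' : ℕ}
    (hkk' : k ≠ k') (hk : l[k]? = some a) (hk' : l[k']? = some a) : 2 ≤ l.count a := by
  obtain ⟨hkl, rfl⟩ := getElem?_eq_some_iff.1 hk
  obtain ⟨hkl', hkk⟩ := getElem?_eq_some_iff.1 hk'
  rw [← duplicate_iff_two_le_count, duplicate_iff_exists_distinct_get]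
  rcases Nat.lt_or_gt_of_ne hkk' with h | h
  · exact ⟨⟨k, hkl⟩, ⟨k', hkl'⟩, h, rfl, by simp [hkk]⟩
  · exact ⟨⟨k', hkl'⟩, ⟨k, hkl⟩, h, by simp [hkk], rfl⟩

end List

open List

section

variable {α β γ : Type*}

theorem length_flatMap_bounds {l : List β} {σ : β → List α} (hσ : ∀ b, σ b ≠ []) {p q : β}
    (hp : l.head? = some p) (hq : l.getLast? = some q) :
    (l.length = 1 → (σ p).length = (l.flatMap σ).length) ∧
    (l.length = 2 → (σ p).length + (σ q).length = (l.flatMap σ).length) ∧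
    (3 ≤ l.length → (σ p).length + (σ q).length + (l.length - 2) ≤ (l.flatMap σ).length) := by
  obtain ⟨t, rfl⟩ := head?_eq_some_iff.1 hp
  obtain ⟨_ | ⟨p', mid⟩, hpt⟩ := getLast?_eq_some_iff.1 hq
  · obtain ⟨rfl, rfl⟩ : p = q ∧ t = [] := by simpa using hpt
    simp
  · obtain ⟨rfl, rfl⟩ : p' = p ∧ t = mid ++ [q] := by simpa [eq_comm] using hpt
    have hmid := length_le_length_flatMap (fun b (_ : b ∈ mid) => hσ b)
    refine ⟨by simp, fun h => ?_, fun _ => ?_⟩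
    · obtain rfl : mid = [] := by simpa using h
      simp
    · simp only [flatMap_cons, flatMap_append, flatMap_nil, append_nil, length_append,
        length_cons, length_nil]
      omega

theorem feasible_length_of_flatMap_eq {r : ℕ} {T : Fin r → List α} {P : Fin r → List β}
    {σ : β → List α} (hσ : ∀ b, σ b ≠ []) (hPT : ∀ i, (P i).flatMap σ = T i) :
    Feasible T P (fun X => (σ X).length) := by
  refine ⟨fun X _ => length_pos_iff.2 (hσ X), fun X => ⟨σ X, rfl, fun i hi => ?_, fun i hi => ?_⟩,
    fun i p q hp hq => hPT i ▸ length_flatMap_bounds hσ hp hq⟩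
  · obtain ⟨t, ht⟩ := head?_eq_some_iff.1 hi
    exact ⟨t.flatMap σ, by rw [← hPT i, ht, flatMap_cons]⟩
  · obtain ⟨t, ht⟩ := getLast?_eq_some_iff.1 hi
    exact ⟨t.flatMap σ, by rw [← hPT i, ht, flatMap_append, flatMap_singleton]⟩

theorem exists_factorization_of_prefix_of_suffix {l : List α} {P : List β} {s : β → List α}
    {p q : β} (hp : P.head? = some p) (hq : P.getLast? = some q) (hs : ∀ X ∈ P, s X ≠ [])
    (hsp : s p <+: l) (hsq : s q <:+ l)
    (h1 : P.length = 1 → (s p).length = l.length)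
    (h2 : P.length = 2 → (s p).length + (s q).length = l.length)
    (h3 : 3 ≤ P.length → (s p).length + (s q).length + (P.length - 2) ≤ l.length) :
    ∃ L : List (List α), L.length = P.length ∧ L.flatten = l ∧ (∀ x ∈ L, x ≠ []) ∧
      L.head? = some (s p) ∧ L.getLast? = some (s q) := by
  have hpP : p ∈ P := mem_of_mem_head? hp
  have hqP : q ∈ P := mem_of_mem_getLast? hq
  obtain hP1 | hP2 : P.length = 1 ∨ 2 ≤ P.length := by
    have := length_pos_iff.2 (ne_nil_of_mem hpP); omega
  · obtain ⟨x, rfl⟩ := length_eq_one_iff.1 hP1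
    obtain ⟨rfl, rfl⟩ : x = p ∧ x = q := by simp_all
    obtain rfl := hsp.eq_of_length (h1 rfl)
    exact ⟨[s x], rfl, by simp, by simpa using hs, rfl, rfl⟩
  · obtain ⟨m, rfl⟩ := exists_eq_append_append_of_prefix_of_suffix hsp hsq (by
      rcases hP2.eq_or_lt with h | h
      · exact (h2 h.symm).le
      · have := h3 h; omega)
    obtain ⟨M, hMlen, rfl, hM⟩ := exists_flatten_eq_of_length_le (P.length - 2) m
      (by have := h2; have := h3; simp only [length_append] at *; omega)
      (fun h => by
        have := h2 (by omega)
        simp only [length_append] at this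
        exact length_eq_zero_iff.1 (by omega))
    refine ⟨s p :: (M ++ [s q]), by simp; omega, by simp, ?_, rfl,
      by rw [← cons_append, getLast?_concat]⟩
    intro x hx
    simp only [mem_cons, mem_append, not_mem_nil, or_false] at hx
    rcases hx with rfl | hx | rfl
    exacts [hs p hpP, hM x hx, hs q hqP]

theorem eq_and_eq_of_sum_count_eq_one {ι : Type*} [Fintype ι] [DecidableEq β]
    {P : ι → List β} {b : β} (hb : ∑ j, (P j).count b = 1) {i j : ι} {k k' : ℕ}
    (hi : (P i)[k]? = some b) (hj : (P j)[k']? = some b) : i = j ∧ k = k' := by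
  have hpos : ∀ {i k}, (P i)[k]? = some b → 0 < (P i).count b :=
    fun h => count_pos_iff.2 (mem_of_getElem? h)
  by_cases hij : i = j
  · subst hij
    refine ⟨rfl, by_contra fun hkk' => ?_⟩
    have := two_le_count_of_getElem?_eq hkk' hi hj
    have := Finset.single_le_sum (f := fun j => (P j).count b) (fun _ _ => Nat.zero_le _)
      (Finset.mem_univ i)
    omega
  · have := Finset.add_le_sum (f := fun j => (P j).count b) (fun _ _ => Nat.zero_le _)
      (Finset.mem_univ i) (Finset.mem_univ j) hij
    have := hpos hi
    have := hpos hj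
    omega

def OnlyBorderBlocks [DecidableEq β] {r : ℕ} (P : Fin r → List β) : Prop :=
  ∀ i : Fin r, ∀ p : Fin (P i).length, 0 < (p : ℕ) → (p : ℕ) + 1 < (P i).length →
    (∑ j, (P j).count ((P i).get p)) = 1

namespace OnlyBorderBlocks

variable [DecidableEq β] {r : ℕ} {P : Fin r → List β}

theorem eq_of_getElem?_eq (hP : OnlyBorderBlocks P) {i j : Fin r} {k k' : ℕ} {b : β}
    (hk : 0 < k ∧ k + 1 < (P i).length) (hi : (P i)[k]? = some b)
    (hj : (P j)[k']? = some b) : i = j ∧ k = k' := by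
  obtain ⟨hkP, hkb⟩ := List.getElem?_eq_some_iff.1 hi
  have := hP i ⟨k, hkP⟩ hk.1 hk.2
  simp only [get_eq_getElem, hkb] at this
  exact eq_and_eq_of_sum_count_eq_one this hi hj

theorem getElem?_eq_of_getElem?_eq (hP : OnlyBorderBlocks P) {L : Fin r → List γ} (f : β → γ)
    (hlen : ∀ i, (L i).length = (P i).length)
    (hhead : ∀ i, (L i).head? = (P i).head?.map f)
    (hlast : ∀ i, (L i).getLast? = (P i).getLast?.map f)
    {i j : Fin r} {k k' : ℕ} {b : β} (hi : (P i)[k]? = some b) (hj : (P j)[k']? = some b) :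
    (L i)[k]? = (L j)[k']? := by
  have hends : ∀ {i k}, (P i)[k]? = some b → ¬(0 < k ∧ k + 1 < (P i).length) →
      (L i)[k]? = some (f b) := by
    intro i k hik hk
    have hkP := (List.getElem?_eq_some_iff.1 hik).1
    obtain rfl | rfl : k = 0 ∨ k = (P i).length - 1 := by omega
    · rw [← head?_eq_getElem?, hhead, head?_eq_getElem?, hik, Option.map_some]
    · rw [← hlen, ← getLast?_eq_getElem?, hlast, getLast?_eq_getElem?, hik, Option.map_some]
  by_cases hk : 0 < k ∧ k + 1 < (P i).length
  · obtain ⟨rfl, rfl⟩ := hP.eq_of_getElem?_eq hk hi hj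
    rfl
  by_cases hk' : 0 < k' ∧ k' + 1 < (P j).length
  · obtain ⟨rfl, rfl⟩ := hP.eq_of_getElem?_eq hk' hj hi
    rfl
  rw [hends hi hk, hends hj hk']

end OnlyBorderBlocks

theorem exists_forall_map_eq {ι : Type*} (P : ι → List β) (L : ι → List γ) (c : γ)
    (hlen : ∀ i, (L i).length = (P i).length)
    (hL : ∀ {i j : ι} {k k' : ℕ} {b : β}, (P i)[k]? = some b → (P j)[k']? = some b →
      (L i)[k]? = (L j)[k']?) :
    ∃ σ : β → γ, (∀ i, (P i).map σ = L i) ∧ ∀ b, σ b = c ∨ ∃ i, σ b ∈ L i := by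
  classical
  let σ b : γ := if h : ∃ ik : ι × ℕ, (P ik.1)[ik.2]? = some b then
    ((L h.choose.1)[h.choose.2]?).getD c else c
  have hσ : ∀ {i : ι} {k : ℕ} {b : β}, (P i)[k]? = some b → (L i)[k]? = some (σ b) := by
    intro i k b hik
    have h : ∃ ik : ι × ℕ, (P ik.1)[ik.2]? = some b := ⟨(i, k), hik⟩
    have hkL : k < (L i).length := hlen i ▸ (List.getElem?_eq_some_iff.1 hik).1
    simp only [σ, dif_pos h, hL h.choose_spec hik, getElem?_eq_getElem hkL, Option.getD_some]
  refine ⟨σ, fun i => ext_getElem? fun k => ?_, fun b => ?_⟩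
  · rw [getElem?_map]
    cases hik : (P i)[k]? with
    | none =>
      rw [Option.map_none, eq_comm, getElem?_eq_none_iff, hlen, ← getElem?_eq_none_iff]
      exact hik
    | some b => exact (hσ hik).symm
  · by_cases h : ∃ ik : ι × ℕ, (P ik.1)[ik.2]? = some b
    · exact Or.inr ⟨h.choose.1, mem_of_getElem? (hσ h.choose_spec)⟩
    · exact Or.inl (dif_neg h)

end

theorem stmt_4_general {α β : Type*} [DecidableEq β] (r : ℕ) (hr : 1 ≤ r)
    (T : Fin r → List α) (P : Fin r → List β)
    (hP : ∀ i, P i ≠ [])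
    (hborder : ∀ i : Fin r, ∀ p : Fin (P i).length,
      0 < (p : ℕ) → (p : ℕ) + 1 < (P i).length →
      (∑ j, (P j).count ((P i).get p)) = 1) :
    (∃ σ : β → List α, (∀ b : β, σ b ≠ []) ∧ ∀ i, (P i).flatMap σ = T i) ↔
    (∃ ℓ : β → ℕ, Feasible T P ℓ) := by
  refine ⟨fun ⟨σ, hσ, hPT⟩ => ⟨_, feasible_length_of_flatMap_eq hσ hPT⟩, ?_⟩
  rintro ⟨ℓ, hpos, hs, hlen⟩
  choose s hsℓ hpre hsuf using hs
  have hs_ne : ∀ i, ∀ X ∈ P i, s X ≠ [] := fun i X hX =>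
    length_pos_iff.1 (hsℓ X ▸ hpos X ⟨i, hX⟩)
  have hfac : ∀ i, ∃ L : List (List α), L.length = (P i).length ∧ L.flatten = T i ∧
      (∀ x ∈ L, x ≠ []) ∧ L.head? = (P i).head?.map s ∧
      L.getLast? = (P i).getLast?.map s := by
    intro i
    have hp := head?_eq_some_head (hP i)
    have hq := getLast?_eq_some_getLast (hP i)
    have := hlen i _ _ hp hq
    simp only [← hsℓ] at this
    rw [hp, hq]
    exact exists_factorization_of_prefix_of_suffix hp hq (hs_ne i) (hpre _ i hp)
      (hsuf _ i hq) this.1 this.2.1 this.2.2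
  choose L hLlen hLflat hLne hLhead hLlast using hfac
  obtain ⟨a, -⟩ := exists_mem_of_ne_nil _ (hs_ne ⟨0, hr⟩ _ (head_mem (hP ⟨0, hr⟩)))
  obtain ⟨σ, hσP, hσL⟩ := exists_forall_map_eq P L [a] hLlen
    ((show OnlyBorderBlocks P from hborder).getElem?_eq_of_getElem?_eq s hLlen hLhead hLlast)
  refine ⟨σ, fun b => ?_, fun i => by rw [flatMap_def, hσP, hLflat]⟩
  rcases hσL b with h | ⟨i, h⟩
  · simp [h]
  · exact hLne i _ h

/-- A system of string equations with *only border blocks*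
(every block occurring at an internal position — neither first nor last — of some
pattern occurs exactly once in the whole system) is satisfied by some assignment of
nonempty strings to the blocks if and only if it admits a feasible length function.
(In particular this applies to systems whose patterns all have length exactly 2,
since such systems have no internal positions at all.) -/
theorem stmt_4 {α β : Type*} [DecidableEq β] (r : ℕ) (hr : 1 ≤ r)
    (T : Fin r → List α) (P : Fin r → List β)
    (hT : ∀ i, T i ≠ []) (hP : ∀ i, P i ≠ [])
    (hborder : ∀ i : Fin r, ∀ p : Fin (P i).length,
      0 < (p : ℕ) → (p : ℕ) + 1 < (P i).length →
      (∑ j, (P j).count ((P i).get p)) = 1) :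
    (∃ σ : β → List α, (∀ b : β, σ b ≠ []) ∧ ∀ i, (P i).flatMap σ = T i) ↔
    (∃ ℓ : β → ℕ, Feasible T P ℓ) :=
  stmt_4_general r hr T P hP hborder
end

section
/- Let κ ≥ 2. Over the alphabet Σ = V ∪ {y_0, …, y_m} (with y_0, …, y_m being m+1 new separator letters) define the target string T = y_0 e_1 y_1 e_2 y_2 ⋯ e_m y_m. Take blocks X_1, …, X_κ together with pairwise distinct further blocks Z_0 and Z_{i,j} for 1 ≤ i < j ≤ κ (each of these occurring exactly once, i.e. jokers), and define the pattern 𝒳 = Z_0 · ∏_{1 ≤ i < j ≤ κ} (X_i X_j Z_{i,j}), the product taken over the pairs (i, j) in lexicographic order. Then the single string equation T ≡ 𝒳 is satisfied by some assignment if and only if G contains a clique of size κ. (Correctness of the reduction in Theorem 4.1.) -/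
namespace Stmt5

/-- The pairs `(i, j)` with `i < j`, listed in lexicographic order. -/
def pairs (κ : ℕ) : List (Fin κ × Fin κ) :=
  (List.finRange κ).flatMap fun i =>
    ((List.finRange κ).filter fun j => decide (i < j)).map fun j => (i, j)

/-- The alphabet `Σ = V ∪ {y₀, …, y_m}`: `Sum.inl i` is the vertex letter `vᵢ`,
`Sum.inr j` is the separator letter `y_j`. -/
abbrev Letter (n m : ℕ) := Fin n ⊕ Fin (m + 1)

/-- The blocks: `Sum.inl i` is `Xᵢ` (for `1 ≤ i ≤ κ`), `Sum.inr (Sum.inl ())` is the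
joker `Z₀`, and `Sum.inr (Sum.inr (i, j))` is the joker `Z_{i,j}` (used for `i < j`);
each joker occurs exactly once in the pattern. -/
abbrev Blk (κ : ℕ) := Fin κ ⊕ (Unit ⊕ (Fin κ × Fin κ))

/-- The target string `T = y₀ e₁ y₁ e₂ y₂ ⋯ e_m y_m`, where the `j`-th edge is the
two-letter string consisting of its endpoints (smaller index first). -/
def target (n m : ℕ) (edges : Fin m → Fin n × Fin n) : List (Letter n m) :=
  [Sum.inr 0] ++ (List.finRange m).flatMap fun j =>
    [Sum.inl (edges j).1, Sum.inl (edges j).2, Sum.inr j.succ]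

/-- The pattern `𝒳 = Z₀ ∏_{i<j, lex order} (Xᵢ Xⱼ Z_{i,j})`. -/
def pattern (κ : ℕ) : List (Blk κ) :=
  [Sum.inr (Sum.inl ())] ++ (pairs κ).flatMap fun p =>
    [Sum.inl p.1, Sum.inl p.2, Sum.inr (Sum.inr p)]

/-!
For `κ ≥ 3` every block `Xᵢ` occurs in two different factors `Xᵢ Xⱼ Z_{i,j}` of the pattern,
while every separator `y_r` occurs only once in `T`; so the `Xᵢ` contain no separator, and each
`Xᵢ Xⱼ`, a separator-free factor of `T` of length at least 2, is a whole edge `e_k`. Hence every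
`Xᵢ` is a single vertex `uᵢ`, and `u₁ < ⋯ < u_κ` is a clique. For `κ = 2` a solution only
forces `T` to be long enough, i.e. `G` to have an edge. Conversely, for a clique
`u₁ < ⋯ < u_κ` the edges `uᵢ uⱼ` occur in the sorted target in the lexicographic order of the
pairs `(i, j)`, so `Xᵢ := uᵢ` works, the jokers absorbing the stretches of `T` in between.
-/

open List

section Lists

variable {α β : Type*}

theorem mem_of_suffix_concat {l w : List β} {c : β} (h : l <:+ w ++ [c]) (hl : l ≠ []) :
    c ∈ l := by
  obtain ⟨l', x, rfl⟩ := (eq_nil_or_concat' l).resolve_left hl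
  have : [x] <:+ w ++ [c] := (suffix_append l' [x]).trans h
  simp_all

theorem infix_or_infix_of_infix_append_concat {P : β → Prop} {s w r : List β} {c : β}
    (hs : ∀ x ∈ s, P x) (hc : ¬ P c) (hne : s ≠ []) (h : s <:+: w ++ [c] ++ r) :
    s <:+: w ∨ s <:+: r := by
  rcases infix_append_iff_ne_nil.1 h with h | h | ⟨s₁, s₂, hs₁, -, rfl, hsuf, -⟩
  · rcases infix_concat_iff.1 h with h | h
    · exact absurd (hs c (mem_of_suffix_concat h hne)) hc
    · exact .inl h
  · exact .inr h
  · exact absurd (hs c (mem_append_left s₂ (mem_of_suffix_concat hsuf hs₁))) hc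

theorem exists_infix_of_infix_flatMap {P : β → Prop} {s : List β} (w : α → List β)
    (c : α → β) (hs : ∀ x ∈ s, P x) (hc : ∀ a, ¬ P (c a)) (hne : s ≠ []) {l : List α}
    (h : s <:+: l.flatMap fun a => w a ++ [c a]) : ∃ a ∈ l, s <:+: w a := by
  induction l with
  | nil => exact absurd (eq_nil_of_infix_nil h) hne
  | cons a l ih =>
    rw [flatMap_cons] at h
    rcases infix_or_infix_of_infix_append_concat hs (hc a) hne h with h | h
    · exact ⟨a, mem_cons_self, h⟩
    · obtain ⟨b, hb, h⟩ := ih h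
      exact ⟨b, mem_cons_of_mem a hb, h⟩

theorem exists_flatMap_eq_append_flatMap (f : α → List β) {l' l : List α} (h : l' <+ l)
    (hnd : l'.Nodup) :
    ∃ (g : List β) (gap : α → List β), l.flatMap f = g ++ l'.flatMap fun a => f a ++ gap a := by
  classical
  induction h with
  | slnil => exact ⟨[], fun _ => [], rfl⟩
  | cons a _ ih =>
    obtain ⟨g, gap, hg⟩ := ih hnd
    exact ⟨f a ++ g, gap, by simp [hg]⟩
  | @cons_cons l₁ l₂ a _ ih =>
    obtain ⟨ha, hnd⟩ := nodup_cons.1 hnd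
    obtain ⟨g, gap, hg⟩ := ih hnd
    refine ⟨[], Function.update gap a g, ?_⟩
    have : l₁.flatMap (fun b => f b ++ Function.update gap a g b) =
        l₁.flatMap fun b => f b ++ gap b :=
      flatMap_congr fun b hb => by rw [Function.update_of_ne (ne_of_mem_of_not_mem hb ha)]
    simp only [flatMap_cons, Function.update_self, this, hg, nil_append, append_assoc]

theorem pair_sublist_flatMap {f : α → List β} {l : List α} {a b : α} {x : β} (ha : a ∈ l)
    (hb : b ∈ l) (hab : a ≠ b) (hxa : x ∈ f a) (hxb : x ∈ f b) : [x, x] <+ l.flatMap f := by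
  induction l with
  | nil => simp at ha
  | cons c l ih =>
    rw [flatMap_cons]
    rcases mem_cons.1 ha with rfl | ha' <;> rcases mem_cons.1 hb with rfl | hb'
    · exact absurd rfl hab
    · exact (singleton_sublist.2 hxa).append (singleton_sublist.2 (mem_flatMap_of_mem hb' hxb))
    · exact (singleton_sublist.2 hxb).append (singleton_sublist.2 (mem_flatMap_of_mem ha' hxa))
    · exact (ih ha' hb').trans (sublist_append_right _ _)

theorem length_le_length_flatMap {f : α → List β} (hf : ∀ a, f a ≠ []) (l : List α) :
    l.length ≤ (l.flatMap f).length := by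
  rw [length_flatMap, ← length_map (f := fun a => (f a).length)]
  exact length_le_sum_of_one_le _ (by simpa [Nat.one_le_iff_ne_zero] using fun a _ => hf a)

theorem eq_singleton_of_append_eq_pair {l₁ l₂ : List α} {a b : α} (h₁ : l₁ ≠ [])
    (h₂ : l₂ ≠ []) (h : l₁ ++ l₂ = [a, b]) : l₁ = [a] ∧ l₂ = [b] := by
  rcases l₁ with _ | ⟨x, _ | ⟨y, t⟩⟩ <;> simp_all

end Lists

theorem Prod.Lex.toLex_map_lt_toLex_map {α β : Type*} [LinearOrder α] [Preorder β]
    {f : α → β} (hf : StrictMono f) {x y : α × α} (h : toLex x < toLex y) :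
    toLex (f x.1, f x.2) < toLex (f y.1, f y.2) := by
  rw [Prod.Lex.toLex_lt_toLex] at h ⊢
  rcases h with h | ⟨h₁, h₂⟩
  · exact .inl (hf h)
  · exact .inr ⟨congrArg f h₁, hf h₂⟩

variable {n m κ : ℕ}

theorem mem_pairs {p : Fin κ × Fin κ} : p ∈ pairs κ ↔ p.1 < p.2 := by
  simp only [pairs, mem_flatMap, mem_map, mem_filter, mem_finRange, decide_eq_true_eq]
  constructor
  · rintro ⟨i, -, j, ⟨-, hij⟩, rfl⟩
    exact hij
  · intro h
    exact ⟨p.1, trivial, p.2, ⟨trivial, h⟩, rfl⟩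

theorem pairwise_toLex_pairs (κ : ℕ) : (pairs κ).Pairwise fun p q => toLex p < toLex q := by
  simp only [pairs, pairwise_flatMap, pairwise_map, Prod.Lex.toLex_lt_toLex, mem_map,
    mem_filter]
  refine ⟨fun i _ => ((pairwise_lt_finRange κ).filter _).imp fun h => .inr ⟨trivial, h⟩, ?_⟩
  exact (pairwise_lt_finRange κ).imp fun h _ ⟨_, _, hx⟩ _ ⟨_, _, hy⟩ => hx ▸ hy ▸ .inl h

theorem exists_mem_pairs_of_ne {i c : Fin κ} (h : i ≠ c) :
    ∃ p ∈ pairs κ, p = (i, c) ∨ p = (c, i) := by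
  rcases h.lt_or_gt with h | h
  · exact ⟨(i, c), mem_pairs.2 h, .inl rfl⟩
  · exact ⟨(c, i), mem_pairs.2 h, .inr rfl⟩

theorem flatMap_pattern {β : Type*} (σ : Blk κ → List β) :
    (pattern κ).flatMap σ = σ (.inr (.inl ())) ++
      (pairs κ).flatMap fun p => σ (.inl p.1) ++ σ (.inl p.2) ++ σ (.inr (.inr p)) := by
  simp [pattern, flatMap_assoc]

def edgeWord (edges : Fin m → Fin n × Fin n) (j : Fin m) : List (Letter n m) :=
  [.inl (edges j).1, .inl (edges j).2]

-- The empty word lets `y₀` be treated like the separator following an edge.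
theorem target_eq (edges : Fin m → Fin n × Fin n) :
    target n m edges = [] ++ [.inr 0] ++
      (finRange m).flatMap fun j => edgeWord edges j ++ [.inr j.succ] := rfl

theorem length_target (edges : Fin m → Fin n × Fin n) :
    (target n m edges).length = 3 * m + 1 := by
  simp [target, Nat.add_comm, Nat.mul_comm]

theorem filter_isRight_target (edges : Fin m → Fin n × Fin n) :
    (target n m edges).filter Sum.isRight = (finRange (m + 1)).map .inr := by
  simp [target, filter_flatMap, filter_cons, finRange_succ, map_eq_flatMap, flatMap_assoc]

theorem not_pair_inr_sublist_target (edges : Fin m → Fin n × Fin n) (r : Fin (m + 1)) :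
    ¬ [.inr r, .inr r] <+ target n m edges := by
  intro h
  have := h.filter Sum.isRight
  rw [filter_isRight_target] at this
  exact nodup_iff_sublist.1 ((nodup_finRange _).map Sum.inr_injective) _
    (by simpa [filter_cons] using this)

theorem exists_eq_edgeWord_of_infix_target (edges : Fin m → Fin n × Fin n)
    {s : List (Letter n m)} (h : s <:+: target n m edges) (hs : ∀ x ∈ s, x.isLeft)
    (hlen : 2 ≤ s.length) : ∃ k, s = edgeWord edges k := by
  have hne : s ≠ [] := ne_nil_of_length_pos (by omega)
  rw [target_eq] at h
  rcases infix_or_infix_of_infix_append_concat hs (by simp) hne h with h | h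
  · exact absurd (eq_nil_of_infix_nil h) hne
  obtain ⟨k, -, hk⟩ := exists_infix_of_infix_flatMap _ _ hs (by simp) hne h
  exact ⟨k, hk.eq_of_length_le (by simpa [edgeWord] using hlen)⟩

def IsOrderedClique (edges : Fin m → Fin n × Fin n) (u : Fin κ → Fin n) : Prop :=
  ∀ i j, i < j → ∃ k, edges k = (u i, u j)

section

variable {edges : Fin m → Fin n × Fin n}

theorem IsOrderedClique.strictMono {u : Fin κ → Fin n} (hu : IsOrderedClique edges u)
    (horder : ∀ j, (edges j).1 < (edges j).2) : StrictMono u := fun i j hij => by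
  obtain ⟨k, hk⟩ := hu i j hij
  simpa [hk] using horder k

theorem exists_clique_iff_exists_isOrderedClique (horder : ∀ j, (edges j).1 < (edges j).2) :
    (∃ S : Finset (Fin n), S.card = κ ∧
        ∀ u ∈ S, ∀ w ∈ S, u ≠ w → ∃ j, edges j = (u, w) ∨ edges j = (w, u)) ↔
      ∃ u : Fin κ → Fin n, IsOrderedClique edges u := by
  constructor
  · rintro ⟨S, hcard, hS⟩
    refine ⟨S.orderEmbOfFin hcard, fun i j hij => ?_⟩
    have hlt := (S.orderEmbOfFin hcard).strictMono hij
    obtain ⟨k, hk | hk⟩ :=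
      hS _ (S.orderEmbOfFin_mem hcard i) _ (S.orderEmbOfFin_mem hcard j) hlt.ne
    · exact ⟨k, hk⟩
    · have := horder k
      rw [hk] at this
      exact absurd this (lt_asymm hlt)
  · rintro ⟨u, hu⟩
    have hinj := (hu.strictMono horder).injective
    refine ⟨Finset.univ.map ⟨u, hinj⟩, by simp, ?_⟩
    simp only [Finset.mem_map, Finset.mem_univ, true_and, Function.Embedding.coeFn_mk]
    rintro _ ⟨i, rfl⟩ _ ⟨j, rfl⟩ hne
    rcases lt_or_gt_of_ne (hinj.ne_iff.1 hne) with h | h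
    · exact (hu i j h).imp fun _ => .inl
    · exact (hu j i h).imp fun _ => .inr

variable {σ : Blk κ → List (Letter n m)}

theorem isLeft_of_mem_solution (hκ : 3 ≤ κ) (h : (pattern κ).flatMap σ = target n m edges)
    (i : Fin κ) : ∀ x ∈ σ (.inl i), x.isLeft := by
  rintro (a | r) hx
  · rfl
  have : Nontrivial (Fin κ) := Fin.nontrivial_iff_two_le.2 (by omega)
  obtain ⟨a, hai⟩ := exists_ne i
  obtain ⟨b, -, hb⟩ := Finset.exists_mem_notMem_of_card_lt_card
    (s := {i, a}) (t := Finset.univ) ((Finset.card_le_two).trans_lt (by simp; omega))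
  simp only [Finset.mem_insert, Finset.mem_singleton, not_or] at hb
  obtain ⟨P, hP, hPi⟩ := exists_mem_pairs_of_ne hai.symm
  obtain ⟨Q, hQ, hQi⟩ := exists_mem_pairs_of_ne (Ne.symm hb.1)
  have hPQ : P ≠ Q := by
    rintro rfl
    rcases hPi with rfl | rfl <;> rcases hQi with h | h <;> simp_all [Prod.ext_iff]
  have hmem : ∀ {p c}, p = (i, c) ∨ p = (c, i) →
      Sum.inr r ∈ σ (.inl p.1) ++ σ (.inl p.2) ++ σ (.inr (.inr p)) := by
    rintro p c (rfl | rfl) <;> simp [hx]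
  refine absurd ?_ (not_pair_inr_sublist_target edges r)
  rw [← h, flatMap_pattern]
  exact (pair_sublist_flatMap hP hQ hPQ (hmem hPi) (hmem hQi)).trans (sublist_append_right _ _)

theorem exists_edge_of_solution (hleft : ∀ i, ∀ x ∈ σ (.inl i), x.isLeft)
    (hσ : ∀ b, σ b ≠ []) (h : (pattern κ).flatMap σ = target n m edges)
    {p : Fin κ × Fin κ} (hp : p ∈ pairs κ) :
    ∃ k, σ (.inl p.1) = [.inl (edges k).1] ∧ σ (.inl p.2) = [.inl (edges k).2] := by
  have hinfix : σ (.inl p.1) ++ σ (.inl p.2) <:+: target n m edges := by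
    rw [← h, flatMap_pattern, flatMap_def]
    have hfactor : σ (.inl p.1) ++ σ (.inl p.2) ++ σ (.inr (.inr p)) <:+:
        ((pairs κ).map fun q => σ (.inl q.1) ++ σ (.inl q.2) ++ σ (.inr (.inr q))).flatten :=
      infix_of_mem_flatten (mem_map_of_mem hp)
    exact infix_append_of_infix_right ((prefix_append _ _).isInfix.trans hfactor)
  obtain ⟨k, hk⟩ := exists_eq_edgeWord_of_infix_target edges hinfix
    (fun x hx => (mem_append.1 hx).elim (hleft _ x) (hleft _ x))
    (by
      have := length_pos_iff.2 (hσ (.inl p.1))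
      have := length_pos_iff.2 (hσ (.inl p.2))
      simp only [length_append]
      omega)
  exact ⟨k, eq_singleton_of_append_eq_pair (hσ _) (hσ _) hk⟩

theorem exists_isOrderedClique_of_solution (hκ : 2 ≤ κ) (hσ : ∀ b, σ b ≠ [])
    (h : (pattern κ).flatMap σ = target n m edges) :
    ∃ u : Fin κ → Fin n, IsOrderedClique edges u := by
  rcases hκ.eq_or_lt with rfl | hκ
  · have hm : (pattern 2).length ≤ (target n m edges).length := h ▸ length_le_length_flatMap hσ _
    rw [length_target, show (pattern 2).length = 4 from rfl] at hm
    let e : Fin m := ⟨0, by omega⟩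
    refine ⟨![(edges e).1, (edges e).2], fun i j hij => ⟨e, ?_⟩⟩
    fin_cases i <;> fin_cases j <;> simp_all
  have : Nontrivial (Fin κ) := Fin.nontrivial_iff_two_le.2 hκ.le
  have hedge := fun p (hp : p ∈ pairs κ) =>
    exists_edge_of_solution (isLeft_of_mem_solution hκ h) hσ h hp
  have hsingle : ∀ i, ∃ a, σ (.inl i) = [.inl a] := by
    intro i
    obtain ⟨c, hc⟩ := exists_ne i
    obtain ⟨p, hp, rfl | rfl⟩ := exists_mem_pairs_of_ne hc
    · obtain ⟨k, -, hk⟩ := hedge _ hp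
      exact ⟨_, hk⟩
    · obtain ⟨k, hk, -⟩ := hedge _ hp
      exact ⟨_, hk⟩
  choose u hu using hsingle
  refine ⟨u, fun i j hij => ?_⟩
  obtain ⟨k, hk₁, hk₂⟩ := hedge (i, j) (mem_pairs.2 hij)
  simp only [hu, cons.injEq, Sum.inl.injEq, and_true] at hk₁ hk₂
  exact ⟨k, Prod.ext hk₁.symm hk₂.symm⟩

theorem exists_solution_of_isOrderedClique (hκ : 2 ≤ κ)
    (horder : ∀ j, (edges j).1 < (edges j).2)
    (hsorted : ∀ j j' : Fin m, j < j' →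
      (edges j).1 < (edges j').1 ∨ ((edges j).1 = (edges j').1 ∧ (edges j).2 < (edges j').2))
    {u : Fin κ → Fin n} (hu : IsOrderedClique edges u) :
    ∃ σ : Blk κ → List (Letter n m),
      (∀ b, σ b ≠ []) ∧ (pattern κ).flatMap σ = target n m edges := by
  obtain ⟨j₀, -⟩ := hu ⟨0, by omega⟩ ⟨1, by omega⟩ (by simp [Fin.lt_def])
  have hex : ∀ p : Fin κ × Fin κ, ∃ k, p ∈ pairs κ → edges k = (u p.1, u p.2) := fun p =>
    if hp : p ∈ pairs κ then (hu _ _ (mem_pairs.1 hp)).imp fun _ hk _ => hk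
    else ⟨j₀, fun h => absurd h hp⟩
  choose k hk using hex
  have hlex : StrictMono fun j => toLex (edges j) :=
    fun j j' h => Prod.Lex.toLex_lt_toLex.2 (hsorted j j' h)
  have hkmono : ((pairs κ).map k).Pairwise (· < ·) := by
    refine pairwise_map.2 ((pairwise_toLex_pairs κ).imp_of_mem fun hp hq hpq => ?_)
    refine hlex.lt_iff_lt.1 ?_
    simp only [hk _ hp, hk _ hq]
    exact Prod.Lex.toLex_map_lt_toLex_map (hu.strictMono horder) hpq
  have hsub : (pairs κ).map k <+ finRange m :=
    sublist_of_subperm_of_pairwise (subperm_of_subset hkmono.nodup fun _ _ => mem_finRange _)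
      hkmono (pairwise_lt_finRange m)
  obtain ⟨g, gap, hg⟩ :=
    exists_flatMap_eq_append_flatMap (fun j => edgeWord edges j ++ [.inr j.succ]) hsub
      hkmono.nodup
  refine ⟨Sum.elim (fun i => [.inl (u i)])
    (Sum.elim (fun _ => .inr 0 :: g) fun p => .inr (k p).succ :: gap (k p)), ?_, ?_⟩
  · rintro (i | _ | p) <;> simp
  · rw [flatMap_pattern, target_eq, hg, flatMap_map]
    simp only [Sum.elim_inl, Sum.elim_inr, nil_append, cons_append, append_assoc]
    refine congrArg (fun t => .inr 0 :: (g ++ t)) (flatMap_congr fun p hp => ?_)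
    simp [edgeWord, hk p hp]

end

/-- **correctness of the reduction in Theorem 4.1.** Let `κ ≥ 2` and let
`G` be a graph on `{v₀, …, v_{n-1}}` whose edge list `e₀, …, e_{m-1}` (each edge an
ordered pair, smaller endpoint first) is sorted lexicographically. Then the single
string equation `T ≡ 𝒳` above is satisfied by some assignment of nonempty strings to
the blocks if and only if `G` contains a clique of size `κ`. -/
theorem stmt_5 (n m κ : ℕ) (hκ : 2 ≤ κ)
    (edges : Fin m → Fin n × Fin n)
    (horder : ∀ j, (edges j).1 < (edges j).2)
    (hsorted : ∀ j j' : Fin m, j < j' →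
      (edges j).1 < (edges j').1 ∨
        ((edges j).1 = (edges j').1 ∧ (edges j).2 < (edges j').2)) :
    (∃ σ : Blk κ → List (Letter n m),
        (∀ b, σ b ≠ []) ∧ (pattern κ).flatMap σ = target n m edges) ↔
    (∃ S : Finset (Fin n), S.card = κ ∧
        ∀ u ∈ S, ∀ w ∈ S, u ≠ w →
          ∃ j : Fin m, edges j = (u, w) ∨ edges j = (w, u)) := by
  rw [exists_clique_iff_exists_isOrderedClique horder]
  constructor
  · rintro ⟨σ, hσ, h⟩
    exact exists_isOrderedClique_of_solution hκ hσ h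
  · rintro ⟨u, hu⟩
    exact exists_solution_of_isOrderedClique hκ horder hsorted hu

end Stmt5
end

section
/- Let κ ≥ 2 and let G be κ-partite with vertex classes V_1, …, V_κ (each class an independent set). Over the alphabet Σ = V ∪ {x, y, z} (three new separator letters) define the targets T_{1,i} = x w_i x for 1 ≤ i ≤ κ, where w_i is the concatenation of the vertices of V_i in increasing index order; T_2 = y e_1 y e_2 y ⋯ e_m y; and T_3 = z e_1 z e_2 z ⋯ e_m z. Take pairwise distinct blocks X_i (1 ≤ i ≤ κ), E_{i,j}, A_{i,j}, B_{i,j} (1 ≤ i < j ≤ κ), and fresh joker blocks (each occurring exactly once in the whole system, one per occurrence of * below). The system consists of the equations: T_{1,i} ≡ * X_i * for each 1 ≤ i ≤ κ; and, for each pair 1 ≤ i < j ≤ κ: T_2 ≡ * E_{i,j} *, T_3 ≡ A_{i,j} E_{i,j} B_{i,j}, T_3 ≡ A_{i,j} X_i *, and T_3 ≡ * X_j B_{i,j}. Then the system is satisfied by some assignment if and only if G contains a clique of size κ (equivalently, a multicolored clique with exactly one vertex in each class V_i). (Correctness of the reduction in Theorem 5.2.) -/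
namespace Stmt8

/-- The alphabet `Σ = V ∪ {x, y, z}`. -/
abbrev Letter (n : ℕ) := Fin n ⊕ Fin 3

def vtx {n : ℕ} (i : Fin n) : Letter n := Sum.inl i
def xSep {n : ℕ} : Letter n := Sum.inr 0
def ySep {n : ℕ} : Letter n := Sum.inr 1
def zSep {n : ℕ} : Letter n := Sum.inr 2

/-- The blocks: the vertex-selection blocks `Xᵢ`, the edge-selection blocks `E_{i,j}`
and the gap blocks `A_{i,j}`, `B_{i,j}` (used for `i < j`), together with fresh joker
blocks (one per occurrence of `*` in the system, each occurring exactly once). -/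
inductive Blk (κ : ℕ) where
  | X (i : Fin κ)
  | E (i j : Fin κ)
  | A (i j : Fin κ)
  | B (i j : Fin κ)
  | J1 (side : Bool) (i : Fin κ)
  | J2 (side : Bool) (i j : Fin κ)
  | J4 (i j : Fin κ)
  | J5 (i j : Fin κ)

/-- `T_{1,i} = x wᵢ x`, where `wᵢ` is the concatenation (in increasing index order) of
the vertices of color class `Vᵢ`. -/
def T1 (n κ : ℕ) (color : Fin n → Fin κ) (i : Fin κ) : List (Letter n) :=
  [xSep] ++ (((List.finRange n).filter fun u => decide (color u = i)).map vtx) ++ [xSep]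

/-- `T₂ = y e₁ y e₂ y ⋯ e_m y`. -/
def T2 (n m : ℕ) (edges : Fin m → Fin n × Fin n) : List (Letter n) :=
  [ySep] ++ (List.finRange m).flatMap fun j =>
    [vtx (edges j).1, vtx (edges j).2, ySep]

/-- `T₃ = z e₁ z e₂ z ⋯ e_m z`. -/
def T3 (n m : ℕ) (edges : Fin m → Fin n × Fin n) : List (Letter n) :=
  [zSep] ++ (List.finRange m).flatMap fun j =>
    [vtx (edges j).1, vtx (edges j).2, zSep]

/-! A solution yields a multicoloured clique: `T_{1,k}` confines `X_k` to class `k`, and since two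
consecutive vertex letters of `T₃` form an edge, whose endpoints have different colours, `X_k`
(a factor of `T₃`) is a single vertex. As `zSep` does not occur in `T₂`, `E_{i,j}` is a
separator-free factor of `T₃`, so it has at most two letters; the equations with `A_{i,j}` and
`B_{i,j}` make it start with `X_i` and end with `X_j`, so `X_i X_j` is an edge. Conversely, a
multicoloured clique is turned into a solution by cutting `T₁`, `T₂`, `T₃` around its vertices
and edges. -/

section Lists

variable {α : Type*}

def sepChain (s : α) (L : List (α × α)) : List α :=
  s :: L.flatMap fun p => [p.1, p.2, s]

theorem sepChain_append_cons (s : α) (L₁ L₂ : List (α × α)) (p : α × α) :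
    sepChain s (L₁ ++ p :: L₂) = sepChain s L₁ ++ p.1 :: p.2 :: sepChain s L₂ := by
  simp [sepChain]

theorem mem_and_head?_of_eq_sepChain {s a b : α} (ha : a ≠ s) (hb : b ≠ s) :
    ∀ {L : List (α × α)} {l r : List α}, l ++ a :: b :: r = sepChain s L →
      (a, b) ∈ L ∧ r.head? = some s
  | [], l, r, h => by
    have := congrArg List.length h
    simp [sepChain] at this
    omega
  | p :: L, [], r, h => by simp_all [sepChain]
  | p :: L, [_], r, h => by
    simp only [sepChain, List.flatMap_cons, List.cons_append, List.nil_append,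
      List.cons.injEq] at h
    obtain ⟨-, rfl, rfl, rfl⟩ := h
    simp
  | p :: L, [_, _], r, h => by simp_all [sepChain]
  | p :: L, _ :: _ :: _ :: l, r, h => by
    simp only [sepChain, List.flatMap_cons, List.cons_append, List.nil_append,
      List.cons.injEq] at h
    have := mem_and_head?_of_eq_sepChain ha hb (L := L) (l := l) (r := r) h.2.2.2
    exact ⟨List.mem_cons_of_mem _ this.1, this.2⟩

theorem mem_of_infix_sepChain {s a b : α} {L : List (α × α)} (h : [a, b] <:+: sepChain s L)
    (ha : a ≠ s) (hb : b ≠ s) : (a, b) ∈ L := by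
  obtain ⟨l, r, h⟩ := h
  exact (mem_and_head?_of_eq_sepChain ha hb (by simpa using h)).1

theorem length_le_two_of_infix_sepChain {s : α} {L : List (α × α)} {w : List α}
    (h : w <:+: sepChain s L) (hs : s ∉ w) : w.length ≤ 2 := by
  obtain ⟨l, r, h⟩ := h
  match w, hs, h with
  | [], _, _ | [_], _, _ | [_, _], _, _ => simp
  | a :: b :: c :: w, hs, h =>
    simp only [List.mem_cons, not_or] at hs
    have := (mem_and_head?_of_eq_sepChain (Ne.symm hs.1) (Ne.symm hs.2.1)
      (r := c :: w ++ r) (by simpa using h)).2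
    simp_all

theorem mem_of_infix_sepChain_of_head?_of_getLast? {s a b : α} {L : List (α × α)}
    {w : List α} (h : w <:+: sepChain s L) (hs : s ∉ w) (hab : a ≠ b)
    (ha : w.head? = some a) (hb : w.getLast? = some b) : (a, b) ∈ L := by
  have hlen := length_le_two_of_infix_sepChain h hs
  match w, hlen, hs, h, ha, hb with
  | [_], _, _, _, ha, hb => simp_all
  | [_, _], _, hs, h, ha, hb =>
    simp only [List.head?_cons, Option.some.injEq, List.getLast?_cons_cons,
      List.getLast?_singleton] at ha hb
    subst ha hb
    simp only [List.mem_cons, List.not_mem_nil, or_false, not_or] at hs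
    exact mem_of_infix_sepChain h (Ne.symm hs.1) (Ne.symm hs.2)

theorem infix_of_append_append_eq {a w c M : List α} {x y : α}
    (ha : a ≠ []) (hc : c ≠ []) (h : a ++ w ++ c = x :: (M ++ [y])) : w <:+: M := by
  obtain ⟨a₀, a, rfl⟩ := List.exists_cons_of_ne_nil ha
  obtain rfl | ⟨c, c₀, rfl⟩ := c.eq_nil_or_concat
  · exact absurd rfl hc
  have h' : a ++ w ++ c ++ [c₀] = M ++ [y] := by simpa using (List.cons.inj h).2
  exact ⟨a, c, (List.append_inj' h' rfl).1⟩

end Lists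

section Reduction

variable {n m κ : ℕ}

theorem vtx_injective : Function.Injective (vtx : Fin n → Letter n) := Sum.inl_injective

theorem vtx_ne_zSep (a : Fin n) : vtx a ≠ zSep := Sum.inl_ne_inr

def edgeLetters (edges : Fin m → Fin n × Fin n) : List (Letter n × Letter n) :=
  (List.finRange m).map fun j => (vtx (edges j).1, vtx (edges j).2)

theorem T2_eq_sepChain (edges : Fin m → Fin n × Fin n) :
    T2 n m edges = sepChain ySep (edgeLetters edges) := by
  simp [T2, sepChain, edgeLetters, List.flatMap_map]

theorem T3_eq_sepChain (edges : Fin m → Fin n × Fin n) :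
    T3 n m edges = sepChain zSep (edgeLetters edges) := by
  simp [T3, sepChain, edgeLetters, List.flatMap_map]

theorem vtx_mk_mem_edgeLetters {edges : Fin m → Fin n × Fin n} {a b : Fin n} :
    (vtx a, vtx b) ∈ edgeLetters edges ↔ ∃ j, edges j = (a, b) := by
  simp [edgeLetters, vtx_injective.eq_iff, Prod.ext_iff]

theorem zSep_not_mem_T2 (edges : Fin m → Fin n × Fin n) : zSep ∉ T2 n m edges := by
  simp [T2, zSep, ySep, vtx]

variable {color : Fin n → Fin κ} {edges : Fin m → Fin n × Fin n}

def IsSolution (color : Fin n → Fin κ) (edges : Fin m → Fin n × Fin n)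
    (σ : Blk κ → List (Letter n)) : Prop :=
  (∀ b, σ b ≠ []) ∧
  (∀ i : Fin κ, [Blk.J1 false i, Blk.X i, Blk.J1 true i].flatMap σ = T1 n κ color i) ∧
  (∀ i j : Fin κ, i < j →
    [Blk.J2 false i j, Blk.E i j, Blk.J2 true i j].flatMap σ = T2 n m edges) ∧
  (∀ i j : Fin κ, i < j → [Blk.A i j, Blk.E i j, Blk.B i j].flatMap σ = T3 n m edges) ∧
  (∀ i j : Fin κ, i < j → [Blk.A i j, Blk.X i, Blk.J4 i j].flatMap σ = T3 n m edges) ∧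
  (∀ i j : Fin κ, i < j → [Blk.J5 i j, Blk.X j, Blk.B i j].flatMap σ = T3 n m edges)

def IsMulticoloredClique (color : Fin n → Fin κ) (edges : Fin m → Fin n × Fin n)
    (u : Fin κ → Fin n) : Prop :=
  (∀ k, color (u k) = k) ∧ ∀ i j, i < j → ∃ t, edges t = (u i, u j)

theorem exists_vtx_of_mem_X {σ : Blk κ → List (Letter n)} (hne : ∀ b, σ b ≠ [])
    {k : Fin κ}
    (h : [Blk.J1 false k, Blk.X k, Blk.J1 true k].flatMap σ = T1 n κ color k) :
    ∀ c ∈ σ (Blk.X k), ∃ v, c = vtx v ∧ color v = k := by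
  intro c hc
  have hinf := infix_of_append_append_eq (hne _) (hne _) (by simpa [T1] using h)
  obtain ⟨v, hv, rfl⟩ : ∃ v, color v = k ∧ vtx v = c := by simpa using hinf.subset hc
  exact ⟨v, rfl, hv⟩

theorem length_le_one_of_infix_T3 (hcolor : ∀ j, color (edges j).1 < color (edges j).2)
    {w : List (Letter n)} {k : Fin κ} (hw : ∀ c ∈ w, ∃ v, c = vtx v ∧ color v = k)
    (hinf : w <:+: T3 n m edges) : w.length ≤ 1 := by
  match w, hw, hinf with
  | [], _, _ | [_], _, _ => simp
  | a :: b :: w, hw, hinf =>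
    obtain ⟨u, rfl, hu⟩ := hw a (by simp)
    obtain ⟨v, rfl, hv⟩ := hw b (by simp)
    have hpair : [vtx u, vtx v] <:+: T3 n m edges :=
      (List.prefix_append [vtx u, vtx v] w).isInfix.trans hinf
    rw [T3_eq_sepChain] at hpair
    obtain ⟨j, hj⟩ := vtx_mk_mem_edgeLetters.1
      (mem_of_infix_sepChain hpair (vtx_ne_zSep u) (vtx_ne_zSep v))
    have := hcolor j
    simp [hj, hu, hv] at this

theorem IsSolution.exists_isMulticoloredClique
    (hcolor : ∀ j, color (edges j).1 < color (edges j).2) {σ : Blk κ → List (Letter n)}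
    (hσ : IsSolution color edges σ) : ∃ u, IsMulticoloredClique color edges u := by
  obtain ⟨hne, h1, h2, h3, h4, h5⟩ := hσ
  have hX := fun k => exists_vtx_of_mem_X hne (h1 k)
  have hu : ∀ k, ∃ v, vtx v ∈ σ (.X k) ∧ color v = k := by
    intro k
    obtain ⟨c, hc⟩ := List.exists_mem_of_ne_nil _ (hne (.X k))
    obtain ⟨v, rfl, hv⟩ := hX k c hc
    exact ⟨v, hc, hv⟩
  choose u hu hcu using hu
  have hsingle : ∀ k, σ (.X k) <:+: T3 n m edges → σ (.X k) = [vtx (u k)] := by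
    intro k hinf
    obtain ⟨c, hc⟩ := List.length_eq_one_iff.1 <| le_antisymm
      (length_le_one_of_infix_T3 hcolor (hX k) hinf) (List.length_pos_of_mem (hu k))
    have := hu k
    rw [hc, List.mem_singleton] at this
    rw [hc, this]
  refine ⟨u, hcu, fun i j hij => ?_⟩
  simp only [List.flatMap_cons, List.flatMap_nil, List.append_nil] at h2 h3 h4 h5
  have hXi := hsingle i (h4 i j hij ▸ List.infix_append' _ _ _)
  have hXj := hsingle j (h5 i j hij ▸ List.infix_append' _ _ _)
  have hhead : (σ (.E i j)).head? = some (vtx (u i)) := by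
    have : σ (.E i j) ++ σ (.B i j) = σ (.X i) ++ σ (.J4 i j) :=
      List.append_cancel_left ((h3 i j hij).trans (h4 i j hij).symm)
    rw [← List.head?_append_of_ne_nil _ (hne _), this, hXi]
    rfl
  have hlast : (σ (.E i j)).getLast? = some (vtx (u j)) := by
    have : σ (.A i j) ++ σ (.E i j) = σ (.J5 i j) ++ σ (.X j) := List.append_cancel_right
      (by simpa only [List.append_assoc] using (h3 i j hij).trans (h5 i j hij).symm)
    rw [← List.getLast?_append_of_ne_nil _ (hne _), this, hXj]
    simp
  have hz : zSep ∉ σ (.E i j) := fun h =>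
    zSep_not_mem_T2 edges ((h2 i j hij ▸ List.infix_append' _ _ _ : _ <:+: _).subset h)
  have hdiff : vtx (u i) ≠ vtx (u j) := fun h =>
    hij.ne (by rw [← hcu i, ← hcu j, vtx_injective h])
  have hE : σ (.E i j) <:+: sepChain zSep (edgeLetters edges) :=
    T3_eq_sepChain edges ▸ h3 i j hij ▸ List.infix_append' _ _ _
  exact vtx_mk_mem_edgeLetters.1
    (mem_of_infix_sepChain_of_head?_of_getLast? hE hz hdiff hhead hlast)

theorem IsMulticoloredClique.exists_clique {u : Fin κ → Fin n}
    (hu : IsMulticoloredClique color edges u) :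
    ∃ S : Finset (Fin n), S.card = κ ∧
      ∀ v ∈ S, ∀ w ∈ S, v ≠ w → ∃ j, edges j = (v, w) ∨ edges j = (w, v) := by
  obtain ⟨hcolor, hedge⟩ := hu
  have hinj : Function.Injective u := Function.LeftInverse.injective hcolor
  refine ⟨Finset.univ.image u, by simp [Finset.card_image_of_injective _ hinj], ?_⟩
  simp only [Finset.mem_image, Finset.mem_univ, true_and]
  rintro _ ⟨i, rfl⟩ _ ⟨j, rfl⟩ hne
  rcases lt_or_gt_of_ne (hinj.ne_iff.1 hne) with hij | hij
  · exact (hedge i j hij).imp fun _ => Or.inl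
  · exact (hedge j i hij).imp fun _ => Or.inr

theorem exists_isMulticoloredClique_of_clique
    (hcolor : ∀ j, color (edges j).1 < color (edges j).2)
    {S : Finset (Fin n)} (hcard : S.card = κ)
    (hS : ∀ v ∈ S, ∀ w ∈ S, v ≠ w → ∃ j, edges j = (v, w) ∨ edges j = (w, v)) :
    ∃ u, IsMulticoloredClique color edges u := by
  have hinj : Set.InjOn color S := by
    intro v hv w hw hvw
    by_contra hne
    obtain ⟨j, hj | hj⟩ := hS v hv w hw hne <;>
      simpa [hj, hvw] using hcolor j
  have hsurj : ∀ k, ∃ v ∈ S, color v = k := by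
    have := Finset.eq_univ_of_card (S.image color)
      (by simp [Finset.card_image_of_injOn hinj, hcard])
    simpa [Finset.ext_iff] using this
  choose u huS hu using hsurj
  refine ⟨u, hu, fun i j hij => ?_⟩
  have hne : u i ≠ u j := fun h => hij.ne (by rw [← hu i, ← hu j, h])
  obtain ⟨t, ht | ht⟩ := hS _ (huS i) _ (huS j) hne
  · exact ⟨t, ht⟩
  · have := hcolor t
    simp only [ht, hu] at this
    exact absurd hij this.not_gt

/-- `pre i j ++ (u i, u j) :: post i j` is the edge list cut around the edge `u i u j`, and
`before k ++ u k :: after k` the class `k` cut around `u k`. -/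
def cliqueAssignment (u : Fin κ → Fin n) (before after : Fin κ → List (Fin n))
    (pre post : Fin κ → Fin κ → List (Letter n × Letter n)) : Blk κ → List (Letter n)
  | .X k => [vtx (u k)]
  | .E i j => [vtx (u i), vtx (u j)]
  | .A i j => sepChain zSep (pre i j)
  | .B i j => sepChain zSep (post i j)
  | .J4 i j => vtx (u j) :: sepChain zSep (post i j)
  | .J5 i j => sepChain zSep (pre i j) ++ [vtx (u i)]
  | .J2 false i j => sepChain ySep (pre i j)
  | .J2 true i j => sepChain ySep (post i j)
  | .J1 false k => xSep :: (before k).map vtx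
  | .J1 true k => (after k).map vtx ++ [xSep]

theorem IsMulticoloredClique.exists_isSolution {u : Fin κ → Fin n}
    (hu : IsMulticoloredClique color edges u) : ∃ σ, IsSolution color edges σ := by
  obtain ⟨hcolor, hedge⟩ := hu
  have hclass : ∀ k, ∃ before after,
      (List.finRange n).filter (fun v => decide (color v = k)) = before ++ u k :: after :=
    fun k => List.append_of_mem (by simp [hcolor])
  choose before after hclass using hclass
  have hsplit : ∀ i j, ∃ pre post, i < j →
      edgeLetters edges = pre ++ (vtx (u i), vtx (u j)) :: post := by
    intro i j
    by_cases hij : i < j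
    · obtain ⟨pre, post, h⟩ := List.append_of_mem (vtx_mk_mem_edgeLetters.2 (hedge i j hij))
      exact ⟨pre, post, fun _ => h⟩
    · exact ⟨[], [], fun h => absurd h hij⟩
  choose pre post hsplit using hsplit
  refine ⟨cliqueAssignment u before after pre post, ?_, fun k => ?_, fun i j hij => ?_,
    fun i j hij => ?_, fun i j hij => ?_, fun i j hij => ?_⟩
  · rintro (_ | _ | _ | _ | ⟨_ | _, _⟩ | ⟨_ | _, _, _⟩ | _ | _) <;>
      simp [cliqueAssignment, sepChain]
  · simp [cliqueAssignment, T1, hclass k]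
  all_goals
    simp [cliqueAssignment, T2_eq_sepChain, T3_eq_sepChain, hsplit i j hij,
      sepChain_append_cons]

end Reduction

theorem stmt_8_general (n m κ : ℕ)
    (color : Fin n → Fin κ)
    (edges : Fin m → Fin n × Fin n)
    (hcolor : ∀ j, color (edges j).1 < color (edges j).2) :
    (∃ σ : Blk κ → List (Letter n),
        (∀ b, σ b ≠ []) ∧
        (∀ i : Fin κ,
          [Blk.J1 false i, Blk.X i, Blk.J1 true i].flatMap σ = T1 n κ color i) ∧
        (∀ i j : Fin κ, i < j →
          [Blk.J2 false i j, Blk.E i j, Blk.J2 true i j].flatMap σ = T2 n m edges) ∧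
        (∀ i j : Fin κ, i < j →
          [Blk.A i j, Blk.E i j, Blk.B i j].flatMap σ = T3 n m edges) ∧
        (∀ i j : Fin κ, i < j →
          [Blk.A i j, Blk.X i, Blk.J4 i j].flatMap σ = T3 n m edges) ∧
        (∀ i j : Fin κ, i < j →
          [Blk.J5 i j, Blk.X j, Blk.B i j].flatMap σ = T3 n m edges)) ↔
    (∃ S : Finset (Fin n), S.card = κ ∧
        ∀ u ∈ S, ∀ w ∈ S, u ≠ w →
          ∃ j : Fin m, edges j = (u, w) ∨ edges j = (w, u)) := by
  change (∃ σ, IsSolution color edges σ) ↔ _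
  constructor
  · rintro ⟨σ, hσ⟩
    obtain ⟨u, hu⟩ := hσ.exists_isMulticoloredClique hcolor
    exact hu.exists_clique
  · rintro ⟨S, hcard, hS⟩
    obtain ⟨u, hu⟩ := exists_isMulticoloredClique_of_clique hcolor hcard hS
    exact hu.exists_isSolution

/-- **correctness of the reduction in Theorem 5.2.** Let `κ ≥ 2`, and let
`G` be a κ-partite graph on `{v₀, …, v_{n-1}}` given by a coloring `color` and an edge
list `e₀, …, e_{m-1}` (each edge an ordered pair, smaller endpoint first, the color of
the first endpoint smaller than the color of the second — the classes being the
index-consecutive sets `V₁, …, V_κ` — and the list sorted lexicographically).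
The system consisting of the equations `T_{1,i} ≡ * Xᵢ *` (for each `i`) and, for each
pair `i < j`, `T₂ ≡ * E_{i,j} *`, `T₃ ≡ A_{i,j} E_{i,j} B_{i,j}`,
`T₃ ≡ A_{i,j} Xᵢ *`, `T₃ ≡ * Xⱼ B_{i,j}`, is satisfied by some assignment of nonempty
strings iff `G` contains a clique of size `κ` (equivalently, a multicolored clique). -/
theorem stmt_8 (n m κ : ℕ) (hκ : 2 ≤ κ)
    (color : Fin n → Fin κ)
    (edges : Fin m → Fin n × Fin n)
    (horder : ∀ j, (edges j).1 < (edges j).2)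
    (hcolor : ∀ j, color (edges j).1 < color (edges j).2)
    (hmono : ∀ u u' : Fin n, u ≤ u' → color u ≤ color u')
    (hsorted : ∀ j j' : Fin m, j < j' →
      (edges j).1 < (edges j').1 ∨
        ((edges j).1 = (edges j').1 ∧ (edges j).2 < (edges j').2)) :
    (∃ σ : Blk κ → List (Letter n),
        (∀ b, σ b ≠ []) ∧
        (∀ i : Fin κ,
          [Blk.J1 false i, Blk.X i, Blk.J1 true i].flatMap σ = T1 n κ color i) ∧
        (∀ i j : Fin κ, i < j →
          [Blk.J2 false i j, Blk.E i j, Blk.J2 true i j].flatMap σ = T2 n m edges) ∧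
        (∀ i j : Fin κ, i < j →
          [Blk.A i j, Blk.E i j, Blk.B i j].flatMap σ = T3 n m edges) ∧
        (∀ i j : Fin κ, i < j →
          [Blk.A i j, Blk.X i, Blk.J4 i j].flatMap σ = T3 n m edges) ∧
        (∀ i j : Fin κ, i < j →
          [Blk.J5 i j, Blk.X j, Blk.B i j].flatMap σ = T3 n m edges)) ↔
    (∃ S : Finset (Fin n), S.card = κ ∧
        ∀ u ∈ S, ∀ w ∈ S, u ≠ w →
          ∃ j : Fin m, edges j = (u, w) ∨ edges j = (w, u)) :=
  stmt_8_general n m κ color edges hcolor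

end Stmt8
end

section
/- Let v_1, …, v_n be pairwise distinct letters and let x be a further letter distinct from all of them. For 1 ≤ i ≤ n define the strings pre(v_i) = x v_1 v_2 ⋯ v_{i−1} and suf(v_i) = v_i v_{i+1} ⋯ v_n. If 1 ≤ i < j ≤ n and 1 ≤ i′, j′ ≤ n are indices such that pre(v_i)·suf(v_j) = pre(v_{i′})·suf(v_{j′}) (concatenation of strings), then i = i′ and j = j′. (Claim 5.4.) -/
/-- **Claim 5.4.** Let `v 0, …, v (n-1)` be pairwise distinct letters and
`x` a further letter distinct from all of them. With
`pre i = x v 0 ⋯ v (i-1)` and `suf i = v i ⋯ v (n-1)`, if `i < j` and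
`pre i ++ suf j = pre i' ++ suf j'`, then `i = i'` and `j = j'`. -/
theorem stmt_9 {α : Type*} [DecidableEq α] (n : ℕ) (v : Fin n → α) (x : α)
    (hv : Function.Injective v) (hx : ∀ i, x ≠ v i)
    (pre suf : Fin n → List α)
    (hpre : ∀ i, pre i = [x] ++ (((List.finRange n).filter fun k => decide (k < i)).map v))
    (hsuf : ∀ i, suf i = ((List.finRange n).filter fun k => decide (i ≤ k)).map v)
    (i j i' j' : Fin n) (hij : i < j)
    (heq : pre i ++ suf j = pre i' ++ suf j') :
    i = i' ∧ j = j' := by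
  have hcf : ∀ (p : Fin n → Bool) (k : Fin n),
      List.count k (List.filter p (List.finRange n)) = if p k then 1 else 0 := by
    intro p k
    by_cases h : p k
    · rw [if_pos h]
      exact List.count_eq_one_of_mem ((List.nodup_finRange n).filter p)
        (List.mem_filter.2 ⟨List.mem_finRange k, h⟩)
    · rw [if_neg h]
      exact List.count_eq_zero_of_not_mem fun hm => h (List.mem_filter.1 hm).2
  have key : ∀ k : Fin n,
      ((if k < i then 1 else 0) + (if j ≤ k then 1 else 0) : ℕ)
        = (if k < i' then 1 else 0) + (if j' ≤ k then 1 else 0) := by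
    intro k
    have h := congrArg (List.count (v k)) heq
    have hxk : x ≠ v k := hx k
    simp only [hpre, hsuf, List.count_append, List.count_cons, List.count_nil,
      List.count_map_of_injective _ _ hv, List.singleton_append, hcf] at h
    simpa [hxk, hxk.symm] using h
  have e1 : i' ≤ i := by
    by_contra hc
    push_neg at hc
    have h1 := key i
    rw [if_neg (lt_irrefl i), if_neg (not_le.2 hij), if_pos hc] at h1
    omega
  have e2 : i < j' := by
    by_contra hc
    push_neg at hc
    have h1 := key i
    rw [if_neg (lt_irrefl i), if_neg (not_le.2 hij), if_pos hc] at h1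
    omega
  have e3 : i ≤ i' := by
    by_contra hc
    push_neg at hc
    have h2 := key i'
    rw [if_pos hc, if_neg (lt_irrefl i'), if_neg (not_le.2 (lt_of_le_of_lt e1 e2))] at h2
    omega
  obtain rfl : i = i' := le_antisymm e3 e1
  refine ⟨rfl, ?_⟩
  have e4 : j' ≤ j := by
    by_contra hc
    push_neg at hc
    have h3 := key j
    rw [if_neg (asymm hij), if_pos (le_refl j), if_neg (not_le.2 hc)] at h3
    omega
  have e5 : j ≤ j' := by
    by_contra hc
    push_neg at hc
    have h4 := key j'
    rw [if_neg (asymm e2), if_neg (not_le.2 hc), if_pos (le_refl j')] at h4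
    omega
  exact le_antisymm e5 e4
end

section
/- Let κ ≥ 1. Let x and y be two new letters not in V, and for a vertex v_i define pre(v_i) = x v_1 v_2 ⋯ v_{i−1} and suf(v_i) = v_i v_{i+1} ⋯ v_n. Define the targets T_v = x v_1 v_2 ⋯ v_n and T_e = y ∏_{j=1}^m ( pre(u_j) suf(w_j) y ), where e_j = {u_j, w_j} is the j-th edge with index(u_j) < index(w_j) and the edges are listed in lexicographic order. Take pairwise distinct blocks X_i and X′_i (1 ≤ i ≤ κ), X_{i,j} and X′_{j,i} (1 ≤ i < j ≤ κ), and fresh joker blocks (one per occurrence of * below, each occurring exactly once in the whole system). The system consists of: the size-2 equations T_v ≡ X_i X′_i for each 1 ≤ i ≤ κ, and T_v ≡ X_{i,j} X′_i and T_v ≡ X_j X′_{j,i} for each 1 ≤ i < j ≤ κ; together with the single duplicate-free equation T_e ≡ * ∏_{1 ≤ i < j ≤ κ} ( X_{i,j} X′_{j,i} * ), the product over the pairs (i, j) in lexicographic order. Then the system is satisfied by some assignment if and only if G contains a clique of size κ. (Correctness of the reduction in Theorem 5.3.) -/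
/-!
The size-2 equations say that `Xᵢ X'ᵢ` splits `T_v` into nonempty halves, which forces
`Xᵢ = pre(f i)` and `X'ᵢ = suf(f i)` for a vertex `f i`, and then `X_{i,j} = Xᵢ` and
`X'_{j,i} = X'ⱼ`. Hence `pre(f i) suf(f j)` is a factor of `T_e` for all `i < j`. Such a factor
starts with `x`, so at the start of an edge block `pre(u) suf(w) y`, and it ends with the last
vertex `v_n`, which occurs in the block only just before `y`; since the vertex lists involved are
strictly increasing this forces `(f i, f j) = (u, w)`. As every edge is listed smaller endpoint
first, `f` is strictly increasing, and its image is a `κ`-clique.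

Conversely, for a clique `g 1 < ⋯ < g κ` the edges `(g i, g j)`, listed lexicographically, form a
sublist of the sorted edge list, and the jokers absorb everything between consecutive chosen edge
blocks; each of them is nonempty because it can be taken to start with a `y`.
-/

namespace Stmt10

/-- The pairs `(i, j)` with `i < j`, listed in lexicographic order. -/
def pairs (κ : ℕ) : List (Fin κ × Fin κ) :=
  (List.finRange κ).flatMap fun i =>
    ((List.finRange κ).filter fun j => decide (i < j)).map fun j => (i, j)

/-- The alphabet `Σ = V ∪ {x, y}`. -/
abbrev Letter (n : ℕ) := Fin n ⊕ Bool

def vtx {n : ℕ} (i : Fin n) : Letter n := Sum.inl i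
def xSep {n : ℕ} : Letter n := Sum.inr false
def ySep {n : ℕ} : Letter n := Sum.inr true

/-- `pre vᵢ = x v₁ v₂ ⋯ v_{i−1}`. -/
def pre (n : ℕ) (i : Fin n) : List (Letter n) :=
  [xSep] ++ (((List.finRange n).filter fun k => decide (k < i)).map vtx)

/-- `suf vᵢ = vᵢ v_{i+1} ⋯ v_n`. -/
def suf (n : ℕ) (i : Fin n) : List (Letter n) :=
  ((List.finRange n).filter fun k => decide (i ≤ k)).map vtx

/-- `T_v = x v₁ v₂ ⋯ v_n`. -/
def Tv (n : ℕ) : List (Letter n) :=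
  [xSep] ++ (List.finRange n).map vtx

/-- `T_e = y ∏_{j=1}^m (pre(u_j) suf(w_j) y)` for the lexicographically sorted edge
list with `e_j = (u_j, w_j)`, `index u_j < index w_j`. -/
def Te (n m : ℕ) (edges : Fin m → Fin n × Fin n) : List (Letter n) :=
  [ySep] ++ (List.finRange m).flatMap fun j =>
    pre n (edges j).1 ++ suf n (edges j).2 ++ [ySep]

/-- The blocks: `Xᵢ`, `X'ᵢ` (for `1 ≤ i ≤ κ`), `X_{i,j}` (`P i j`) and `X'_{j,i}`
(`P' i j`) for `i < j`, and the fresh joker blocks `J0` and `J i j` (one per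
occurrence of `*`, each occurring exactly once in the whole system). -/
inductive Blk (κ : ℕ) where
  | X (i : Fin κ)
  | X' (i : Fin κ)
  | P (i j : Fin κ)
  | P' (i j : Fin κ)
  | J0
  | J (i j : Fin κ)

/-- The single size-`c` duplicate-free pattern `* ∏_{i<j} (X_{i,j} X'_{j,i} *)`,
the product over the pairs `(i, j)` in lexicographic order. -/
def patternE (κ : ℕ) : List (Blk κ) :=
  [Blk.J0] ++ (pairs κ).flatMap fun p =>
    [Blk.P p.1 p.2, Blk.P' p.1 p.2, Blk.J p.1 p.2]

section Lists

variable {α β ι : Type*}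

theorem cons_infix_of_cons_infix_append {c : α} {ℓ B W : List α} (hc : c ∉ B)
    (h : c :: ℓ <:+: B ++ W) : c :: ℓ <:+: W := by
  induction B with
  | nil => simpa using h
  | cons b B ih =>
    rcases List.infix_cons_iff.1 h with h | h
    · exact absurd ((List.cons_prefix_cons.1 h).1 ▸ List.mem_cons_self) hc
    · exact ih (fun hB => hc (List.mem_cons_of_mem _ hB)) h

theorem eq_nil_of_prefix_flatMap_cons {c : α} {t : List α} {B : β → List α} {E : List β}
    (hc : c ∉ t) (h : t <+: E.flatMap fun e => c :: B e) : t = [] := by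
  cases E with
  | nil => simpa using h
  | cons e E =>
    rcases List.prefix_cons_iff.1 h with h | ⟨t', rfl, -⟩
    · exact h
    · exact absurd List.mem_cons_self hc

theorem exists_prefix_of_cons_infix_flatMap_cons {c : α} {ℓ : List α} {B : β → List α}
    {E : List β} (hℓ : c ∉ ℓ) (hB : ∀ e ∈ E, c ∉ B e)
    (h : c :: ℓ <:+: E.flatMap fun e => c :: B e) : ∃ e ∈ E, ℓ <+: B e := by
  induction E with
  | nil => simp at h
  | cons e E ih =>
    rw [List.flatMap_cons, List.cons_append] at h
    rcases List.infix_cons_iff.1 h with h | h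
    · refine ⟨e, List.mem_cons_self, ?_⟩
      have h := (List.cons_prefix_cons.1 h).2
      rcases List.prefix_or_prefix_of_prefix h (List.prefix_append _ _) with h' | ⟨t, rfl⟩
      · exact h'
      · rw [List.prefix_append_right_inj] at h
        rw [eq_nil_of_prefix_flatMap_cons (fun ht => hℓ (List.mem_append_right _ ht)) h,
          List.append_nil]
    · obtain ⟨e', he', h'⟩ := ih (fun e' he' => hB e' (List.mem_cons_of_mem _ he'))
        (cons_infix_of_cons_infix_append (hB e List.mem_cons_self) h)
      exact ⟨e', List.mem_cons_of_mem _ he', h'⟩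

theorem filter_lt_eq_and_filter_le_eq [LinearOrder α] {L₁ L₂ : List α} {k : α}
    (h : (L₁ ++ k :: L₂).Pairwise (· < ·)) :
    (L₁ ++ k :: L₂).filter (· < k) = L₁ ∧ (L₁ ++ k :: L₂).filter (k ≤ ·) = k :: L₂ := by
  simp only [List.pairwise_append, List.pairwise_cons, List.mem_cons] at h
  obtain ⟨hL₁, ⟨hk, -⟩, hL₁k⟩ := h
  constructor
  · rw [List.filter_append, List.filter_eq_self.2 fun x hx => by simpa using hL₁k x hx k (.inl rfl),
      List.filter_eq_nil_iff.2 fun x hx => by grind, List.append_nil]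
  · rw [List.filter_append, List.filter_eq_nil_iff.2 fun x hx => by grind [hL₁k x hx k (.inl rfl)],
      List.filter_eq_self.2 fun x hx => by grind, List.nil_append]

theorem exists_flatMap_eq_of_map_sublist [DecidableEq ι] (F : β → List α) (c : α) (q : ι → β)
    {P : List ι} (hP : P.Nodup) {E : List β} (h : (P.map q).Sublist E) :
    ∃ (A : List α) (J : ι → List α),
      E.flatMap (fun e => F e ++ [c]) = A ++ P.flatMap fun i => F (q i) ++ c :: J i := by
  induction E generalizing P with
  | nil =>
    obtain rfl : P = [] := List.map_eq_nil_iff.1 (List.sublist_nil.1 h)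
    exact ⟨[], fun _ => [], by simp⟩
  | cons e E ih =>
    rcases P with _ | ⟨i, P⟩
    · exact ⟨(e :: E).flatMap (fun e => F e ++ [c]), fun _ => [], by simp⟩
    rw [List.nodup_cons] at hP
    rcases List.sublist_cons_iff.1 h with h | ⟨r, hr, h⟩
    · obtain ⟨A, J, hA⟩ := ih (hP.2.cons hP.1) h
      exact ⟨F e ++ [c] ++ A, J, by simp [hA]⟩
    · obtain ⟨rfl, rfl⟩ := List.cons_eq_cons.1 hr
      obtain ⟨A, J, hA⟩ := ih hP.2 h
      refine ⟨[], Function.update J i A, ?_⟩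
      have hJ : P.flatMap (fun j => F (q j) ++ c :: Function.update J i A j) =
          P.flatMap (fun j => F (q j) ++ c :: J j) :=
        List.flatMap_congr fun j hj => by rw [Function.update_of_ne (ne_of_mem_of_not_mem hj hP.1)]
      simp [hA, hJ]

end Lists

section Words

variable {n : ℕ}

def gapList (n : ℕ) (a b : Fin n) : List (Fin n) :=
  (List.finRange n).filter (· < a) ++ (List.finRange n).filter (b ≤ ·)

theorem vtx_injective : Function.Injective (vtx : Fin n → Letter n) :=
  Sum.inl_injective

theorem pre_append_suf_eq_cons (a b : Fin n) :
    pre n a ++ suf n b = xSep :: (gapList n a b).map vtx := by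
  simp [pre, suf, gapList]

theorem mem_gapList {a b k : Fin n} : k ∈ gapList n a b ↔ k < a ∨ b ≤ k := by
  simp [gapList]

theorem pairwise_gapList {a b : Fin n} (h : a ≤ b) : (gapList n a b).Pairwise (· < ·) := by
  refine List.pairwise_append.2 ⟨(List.pairwise_lt_finRange n).filter _,
    (List.pairwise_lt_finRange n).filter _, fun x hx y hy => ?_⟩
  simp only [List.mem_filter, List.mem_finRange, decide_eq_true_eq, true_and] at hx hy
  exact hx.trans_le (h.trans hy)

theorem gapList_self (a : Fin n) : gapList n a a = List.finRange n :=
  (pairwise_gapList le_rfl).eq_of_mem_iff (List.pairwise_lt_finRange n) fun k => by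
    simp [mem_gapList, lt_or_ge]

theorem gapList_eq_of_prefix {a b u w : Fin n} (huw : u ≤ w)
    (h : gapList n a b <+: gapList n u w) : gapList n a b = gapList n u w := by
  obtain ⟨z, hz⟩ := h
  have hsorted := pairwise_gapList huw
  rw [← hz, List.pairwise_append] at hsorted
  cases z with
  | nil => simpa using hz
  | cons y z =>
    -- `max y b` lies in `gapList n a b` and is not smaller than `y`
    have := hsorted.2.2 (max y b) (mem_gapList.2 (.inr (le_max_right _ _))) y List.mem_cons_self
    exact absurd this (not_lt.2 (le_max_left _ _))

theorem eq_of_gapList_eq {a b u w : Fin n} (huw : u < w) (h : gapList n a b = gapList n u w) :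
    a = u ∧ b = w := by
  have hmem : ∀ k, k < a ∨ b ≤ k ↔ k < u ∨ w ≤ k := fun k => by
    rw [← mem_gapList, ← mem_gapList, h]
  have := hmem a; have := hmem b; have := hmem u; have := hmem w
  omega

theorem pre_append_suf (k : Fin n) : pre n k ++ suf n k = Tv n := by
  rw [pre_append_suf_eq_cons, gapList_self, Tv, List.singleton_append]

theorem suf_ne_nil (k : Fin n) : suf n k ≠ [] :=
  List.ne_nil_of_mem (List.mem_map_of_mem (List.mem_filter.2 ⟨List.mem_finRange k, by simp⟩))

theorem exists_eq_pre_and_eq_suf {u v : List (Letter n)} (hu : u ≠ []) (hv : v ≠ [])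
    (h : u ++ v = Tv n) : ∃ k, u = pre n k ∧ v = suf n k := by
  obtain ⟨c, u, rfl⟩ := List.exists_cons_of_ne_nil hu
  rw [Tv, List.singleton_append, List.cons_append, List.cons_eq_cons] at h
  obtain ⟨rfl, h⟩ := h
  obtain ⟨L₁, L₂, hL, rfl, rfl⟩ := List.append_eq_map_iff.1 h
  obtain ⟨k, L₂, rfl⟩ := List.exists_cons_of_ne_nil (show L₂ ≠ [] by rintro rfl; exact hv rfl)
  have hfilter := filter_lt_eq_and_filter_le_eq (hL ▸ List.pairwise_lt_finRange n)
  rw [← hL] at hfilter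
  exact ⟨k, by simp [pre, hfilter.1], by simp [suf, hfilter.2]⟩

theorem Te_eq_cons_flatMap (m : ℕ) (edges : Fin m → Fin n × Fin n) :
    Te n m edges = ySep :: (List.ofFn edges).flatMap fun e => pre n e.1 ++ suf n e.2 ++ [ySep] := by
  simp [Te, List.ofFn_eq_map, List.flatMap_map]

theorem exists_edge_of_infix_Te {m : ℕ} {edges : Fin m → Fin n × Fin n}
    (horder : ∀ j, (edges j).1 < (edges j).2) {a b : Fin n}
    (h : pre n a ++ suf n b <:+: Te n m edges) : ∃ j, edges j = (a, b) := by
  simp only [Te_eq_cons_flatMap, pre_append_suf_eq_cons, List.cons_append] at h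
  have h := (List.infix_cons_iff.1 h).resolve_left (by simp [xSep, ySep])
  obtain ⟨e, he, hpre⟩ :=
    exists_prefix_of_cons_infix_flatMap_cons (by simp [vtx, xSep]) (by simp [vtx, xSep, ySep]) h
  obtain ⟨j, rfl⟩ := List.mem_ofFn.1 he
  rcases List.prefix_concat_iff.1 hpre with hpre | hpre
  · simpa [vtx, ySep] using congrArg (ySep ∈ ·) hpre
  · rw [List.prefix_map_iff_of_injective vtx_injective] at hpre
    obtain ⟨rfl, rfl⟩ := eq_of_gapList_eq (horder j) (gapList_eq_of_prefix (horder j).le hpre)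
    exact ⟨j, rfl⟩

end Words

section Pattern

variable {κ : ℕ}

theorem mem_pairs {i j : Fin κ} : (i, j) ∈ pairs κ ↔ i < j := by
  simp [pairs]

theorem pairwise_pairs (κ : ℕ) : (pairs κ).Pairwise (Prod.Lex (· < ·) (· < ·)) := by
  rw [pairs, List.pairwise_flatMap]
  refine ⟨fun i _ => ?_, (List.pairwise_lt_finRange κ).imp fun hij _ hp _ hq => ?_⟩
  · exact List.pairwise_map.2 (((List.pairwise_lt_finRange κ).filter _).imp (Prod.Lex.right _))
  · obtain ⟨_, -, rfl⟩ := List.mem_map.1 hp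
    obtain ⟨_, -, rfl⟩ := List.mem_map.1 hq
    exact Prod.Lex.left _ _ hij

theorem flatMap_patternE {α : Type*} (σ : Blk κ → List α) :
    (patternE κ).flatMap σ = σ .J0 ++
      (pairs κ).flatMap fun p => σ (.P p.1 p.2) ++ σ (.P' p.1 p.2) ++ σ (.J p.1 p.2) := by
  simp [patternE, List.flatMap_assoc]

end Pattern

section Reduction

variable {n m κ : ℕ} {edges : Fin m → Fin n × Fin n}

theorem exists_edge_map_of_solution (horder : ∀ j, (edges j).1 < (edges j).2)
    {σ : Blk κ → List (Letter n)} (hne : ∀ b, σ b ≠ [])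
    (hX : ∀ i : Fin κ, [Blk.X i, Blk.X' i].flatMap σ = Tv n)
    (hP : ∀ i j : Fin κ, i < j → [Blk.P i j, Blk.X' i].flatMap σ = Tv n)
    (hP' : ∀ i j : Fin κ, i < j → [Blk.X j, Blk.P' i j].flatMap σ = Tv n)
    (hE : (patternE κ).flatMap σ = Te n m edges) :
    ∃ f : Fin κ → Fin n, ∀ i j, i < j → ∃ e, edges e = (f i, f j) := by
  simp only [List.flatMap_cons, List.flatMap_nil, List.append_nil] at hX hP hP'
  choose f hpre hsuf using fun i => exists_eq_pre_and_eq_suf (hne (.X i)) (hne (.X' i)) (hX i)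
  refine ⟨f, fun i j hij => exists_edge_of_infix_Te horder ?_⟩
  have hPX : σ (.P i j) = σ (.X i) := List.append_cancel_right ((hP i j hij).trans (hX i).symm)
  have hP'X' : σ (.P' i j) = σ (.X' j) :=
    List.append_cancel_left ((hP' i j hij).trans (hX j).symm)
  rw [← hpre, ← hsuf, ← hPX, ← hP'X', ← hE, flatMap_patternE]
  exact List.infix_append_of_infix_right (List.infix_append_left.trans
    (List.infix_of_mem_flatten (List.mem_map_of_mem (mem_pairs.2 hij))))

theorem exists_solution_of_edge_map
    (hsorted : (List.ofFn edges).Pairwise (Prod.Lex (· < ·) (· < ·)))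
    {g : Fin κ → Fin n} (hg : StrictMono g) (hedge : ∀ i j, i < j → ∃ e, edges e = (g i, g j)) :
    ∃ σ : Blk κ → List (Letter n),
      (∀ b, σ b ≠ []) ∧
      (∀ i : Fin κ, [Blk.X i, Blk.X' i].flatMap σ = Tv n) ∧
      (∀ i j : Fin κ, i < j → [Blk.P i j, Blk.X' i].flatMap σ = Tv n) ∧
      (∀ i j : Fin κ, i < j → [Blk.X j, Blk.P' i j].flatMap σ = Tv n) ∧
      (patternE κ).flatMap σ = Te n m edges := by
  have hsortedQ : ((pairs κ).map (Prod.map g g)).Pairwise (Prod.Lex (· < ·) (· < ·)) :=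
    List.pairwise_map.2 <| (pairwise_pairs κ).imp fun h =>
      Prod.lex_def.2 ((Prod.lex_def.1 h).imp (hg ·) fun h => ⟨congrArg g h.1, hg h.2⟩)
  have hsub : ((pairs κ).map (Prod.map g g)).Sublist (List.ofFn edges) := by
    refine List.sublist_of_subperm_of_pairwise (List.subperm_of_subset hsortedQ.nodup ?_)
      hsortedQ hsorted
    intro _ he
    obtain ⟨⟨i, j⟩, hp, rfl⟩ := List.mem_map.1 he
    obtain ⟨e, he⟩ := hedge i j (mem_pairs.1 hp)
    exact List.mem_ofFn.2 ⟨e, he⟩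
  obtain ⟨A, J, hA⟩ := exists_flatMap_eq_of_map_sublist (fun e => pre n e.1 ++ suf n e.2) ySep
    (Prod.map g g) (pairwise_pairs κ).nodup hsub
  refine ⟨fun
    | .X i => pre n (g i)
    | .X' i => suf n (g i)
    | .P i _ => pre n (g i)
    | .P' _ j => suf n (g j)
    | .J0 => ySep :: A
    | .J i j => ySep :: J (i, j), ?_, ?_, ?_, ?_, ?_⟩
  · rintro (_ | _ | _ | _ | _ | _) <;> simp [pre, suf_ne_nil]
  · simp [pre_append_suf]
  · simp [pre_append_suf]
  · simp [pre_append_suf]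
  · rw [flatMap_patternE, Te_eq_cons_flatMap, hA]
    simp

end Reduction

theorem stmt_10_general (n m κ : ℕ)
    (edges : Fin m → Fin n × Fin n)
    (horder : ∀ j, (edges j).1 < (edges j).2)
    (hsorted : ∀ j j' : Fin m, j < j' →
      (edges j).1 < (edges j').1 ∨
        ((edges j).1 = (edges j').1 ∧ (edges j).2 < (edges j').2)) :
    (∃ σ : Blk κ → List (Letter n),
        (∀ b, σ b ≠ []) ∧
        (∀ i : Fin κ, [Blk.X i, Blk.X' i].flatMap σ = Tv n) ∧
        (∀ i j : Fin κ, i < j → [Blk.P i j, Blk.X' i].flatMap σ = Tv n) ∧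
        (∀ i j : Fin κ, i < j → [Blk.X j, Blk.P' i j].flatMap σ = Tv n) ∧
        (patternE κ).flatMap σ = Te n m edges) ↔
    (∃ S : Finset (Fin n), S.card = κ ∧
        ∀ u ∈ S, ∀ w ∈ S, u ≠ w →
          ∃ j : Fin m, edges j = (u, w) ∨ edges j = (w, u)) := by
  constructor
  · rintro ⟨σ, hne, hX, hP, hP', hE⟩
    obtain ⟨f, hf⟩ := exists_edge_map_of_solution horder hne hX hP hP' hE
    have hmono : StrictMono f := fun i j hij => by
      obtain ⟨e, he⟩ := hf i j hij
      simpa [he] using horder e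
    refine ⟨Finset.univ.image f, by simp [Finset.card_image_of_injective _ hmono.injective], ?_⟩
    simp only [Finset.mem_image, Finset.mem_univ, true_and]
    rintro _ ⟨i, rfl⟩ _ ⟨j, rfl⟩ hij
    rcases lt_or_gt_of_ne (ne_of_apply_ne f hij) with h | h
    · exact (hf i j h).imp fun _ => Or.inl
    · exact (hf j i h).imp fun _ => Or.inr
  · rintro ⟨S, hS, hclique⟩
    let g := S.orderEmbOfFin hS
    refine exists_solution_of_edge_map
      (List.pairwise_ofFn.2 fun j j' h => Prod.lex_def.2 (hsorted j j' h)) g.strictMono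
      fun i j hij => ?_
    obtain ⟨e, he | he⟩ := hclique _ (S.orderEmbOfFin_mem hS i) _ (S.orderEmbOfFin_mem hS j)
      (g.strictMono hij).ne
    · exact ⟨e, he⟩
    · have := horder e
      rw [he] at this
      exact absurd this (g.strictMono hij).asymm

/-- **correctness of the reduction in Theorem 5.3.** Let `κ ≥ 1` and let
`G` be a graph on `{v₀, …, v_{n-1}}` whose edge list (each edge an ordered pair, smaller
endpoint first) is sorted lexicographically. The system consisting of the size-2
equations `T_v ≡ Xᵢ X'ᵢ` (for each `i`), and `T_v ≡ X_{i,j} X'ᵢ`, `T_v ≡ Xⱼ X'_{j,i}`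
(for each `i < j`), together with the single duplicate-free equation
`T_e ≡ * ∏_{i<j} (X_{i,j} X'_{j,i} *)`, is satisfied by some assignment of nonempty
strings to the blocks iff `G` contains a clique of size `κ`. -/
theorem stmt_10 (n m κ : ℕ) (hκ : 1 ≤ κ)
    (edges : Fin m → Fin n × Fin n)
    (horder : ∀ j, (edges j).1 < (edges j).2)
    (hsorted : ∀ j j' : Fin m, j < j' →
      (edges j).1 < (edges j').1 ∨
        ((edges j).1 = (edges j').1 ∧ (edges j).2 < (edges j').2)) :
    (∃ σ : Blk κ → List (Letter n),
        (∀ b, σ b ≠ []) ∧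
        (∀ i : Fin κ, [Blk.X i, Blk.X' i].flatMap σ = Tv n) ∧
        (∀ i j : Fin κ, i < j → [Blk.P i j, Blk.X' i].flatMap σ = Tv n) ∧
        (∀ i j : Fin κ, i < j → [Blk.X j, Blk.P' i j].flatMap σ = Tv n) ∧
        (patternE κ).flatMap σ = Te n m edges) ↔
    (∃ S : Finset (Fin n), S.card = κ ∧
        ∀ u ∈ S, ∀ w ∈ S, u ≠ w →
          ∃ j : Fin m, edges j = (u, w) ∨ edges j = (w, u)) :=
  stmt_10_general n m κ edges horder hsorted

end Stmt10
end
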